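/- arXiv:2008.07926 — 8 statements merged into one kernel-verified Lean document; each statement's English description precedes it below -/
import Mathlib

section
/- Let 1 < k < n be integers and for each 1 ≤ i ≤ n let X_i = {0, 1, ..., k−1}. For every subset α = {i_1, ..., i_k} ⊆ {1, ..., n} of cardinality k, define a measure μ_α on X_α = ∏_{i∈α} X_i by μ_α({x}) = k^{1−k} if x_{i_1} + ... + x_{i_k} ≡ 1 (mod k) and μ_α({x}) = 0 otherwise. Then every μ_α is a probability measure, the family {μ_α} is consistent, yet there exists no uniting probability measure for this family. In particular, for 1 < k < n consistency is not sufficient for the existence of a uniting measure. -/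
open MeasureTheory
open scoped ENNReal

/-- The measure on `X_α = ∏_{i ∈ α} {0, …, k-1}` assigning mass `k^{1-k}` to points
whose coordinate sum is `≡ 1 (mod k)` and `0` to all other points. -/
noncomputable def muZero (n k : ℕ) (α : Finset (Fin n)) :
    Measure ((i : α) → Fin k) :=
  ∑ x : ((i : α) → Fin k),
    (if (∑ i : α, (x i).val) % k = 1 then ((k : ℝ≥0∞) ^ (k - 1))⁻¹ else 0) •
      Measure.dirac x

/-!
On a `k`-set `α`, the constraint `∑ x = 1` in `Fin k` determines any one coordinate from the
others, so forgetting one coordinate maps `μ_α` onto the uniform measure on `Fin k ^ (k-1)`.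
Hence every marginal of `μ_α` on a proper subset of `α` is uniform, which gives both total mass
one and consistency. A uniting measure would be carried by points `x` with `∑_{i∈α} x_i = 1`
for every `k`-set `α`; since `n > k`, exchanging an index of `α` for one outside it forces all
`x_i` to be equal, and then `1 = k • x_j = 0` in `Fin k`.
-/

open Finset

section SumConstraint

variable {ι G : Type*} [Fintype ι] [AddCommGroup G]

theorem eq_of_forall_ne_eq_of_sum_eq {a : ι} {x y : ι → G} (h : ∀ i ≠ a, x i = y i)
    (hsum : ∑ i, x i = ∑ i, y i) : x = y := by
  have hdiff : ∑ i, (x i - y i) = x a - y a :=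
    Fintype.sum_eq_single a fun i hi => sub_eq_zero.2 (h i hi)
  funext i
  by_cases hi : i = a
  · subst hi
    rwa [sum_sub_distrib, hsum, sub_self, eq_comm, sub_eq_zero] at hdiff
  · exact h i hi

theorem exists_forall_ne_eq_and_sum_eq [DecidableEq ι] (a : ι) (y : ι → G) (c : G) :
    ∃ x : ι → G, (∀ i ≠ a, x i = y i) ∧ ∑ i, x i = c :=
  ⟨y + Pi.single a (c - ∑ i, y i), fun i hi => by simp [hi], by simp [sum_add_distrib]⟩

end SumConstraint

theorem card_filter_restrict₂_erase_eq_and_sum_eq {κ G : Type*} [DecidableEq κ]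
    [AddCommGroup G] [Fintype G] [DecidableEq G] {s : Finset κ} {a : κ} (ha : a ∈ s)
    (z : (s.erase a) → G) (c : G) :
    #{x : s → G | restrict₂ (π := fun _ => G) (s.erase_subset a) x = z ∧ ∑ i, x i = c} =
      1 := by
  set a' : s := ⟨a, ha⟩
  have hne : ∀ j : s.erase a, (⟨j, erase_subset a s j.2⟩ : s) ≠ a' := fun j h =>
    (mem_erase.1 j.2).1 (congrArg Subtype.val h)
  obtain ⟨x₀, hx₀, hsum₀⟩ := exists_forall_ne_eq_and_sum_eq a'
    (fun i => if h : i.1 = a then 0 else z ⟨i, mem_erase.2 ⟨h, i.2⟩⟩) c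
  rw [card_eq_one]
  refine ⟨x₀, eq_singleton_iff_unique_mem.2 ⟨?_, ?_⟩⟩
  · refine mem_filter.2 ⟨mem_univ _, funext fun j => ?_, hsum₀⟩
    simp [hx₀ _ (hne j), (mem_erase.1 j.2).1]
  · rintro x hx
    obtain ⟨hxz, hxsum⟩ := (mem_filter.1 hx).2
    refine eq_of_forall_ne_eq_of_sum_eq (a := a') (fun i hi => ?_) (hxsum.trans hsum₀.symm)
    have hia : i.1 ≠ a := fun h => hi (Subtype.ext h)
    rw [hx₀ i hi, dif_neg hia, ← hxz]
    rfl

theorem exists_nsmul_eq_of_forall_card_sum_eq {ι G : Type*} [Fintype ι] [DecidableEq ι]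
    [AddCommGroup G] {k : ℕ} (hk : k < Fintype.card ι) {x : ι → G} {c : G}
    (h : ∀ α : Finset ι, #α = k → ∑ i ∈ α, x i = c) : ∃ g : G, k • g = c := by
  obtain ⟨α, -, hα⟩ :=
    exists_subset_card_eq (s := (univ : Finset ι)) (n := k) (by rw [card_univ]; exact hk.le)
  obtain ⟨j, -, hj⟩ := exists_mem_notMem_of_card_lt_card (s := α) (t := univ)
    (by rw [card_univ, hα]; exact hk)
  have hconst : ∀ i ∈ α, x i = x j := by
    intro i hi
    have hj' : j ∉ α.erase i := fun h => hj (mem_of_mem_erase h)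
    have hswap := h (insert j (α.erase i))
      (by rw [card_insert_of_notMem hj', card_erase_add_one hi, hα])
    rw [sum_insert hj', ← h α hα, ← add_sum_erase α x hi] at hswap
    exact (add_right_cancel hswap).symm
  exact ⟨x j, by rw [← h α hα, sum_congr rfl hconst, sum_const, hα]⟩

theorem Fin.val_finset_sum {k : ℕ} [NeZero k] {ι : Type*} (s : Finset ι) (f : ι → Fin k) :
    (∑ i ∈ s, f i).val = (∑ i ∈ s, (f i).val) % k := by
  induction s using Finset.cons_induction with
  | empty => simp
  | cons a s ha ih => rw [Finset.sum_cons, Finset.sum_cons, Fin.val_add, ih, Nat.add_mod_mod]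

theorem Fin.sum_val_mod_eq_one_iff {k : ℕ} [NeZero k] (hk : 1 < k) {ι : Type*} [Fintype ι]
    (x : ι → Fin k) : (∑ i, (x i).val) % k = 1 ↔ ∑ i, x i = 1 := by
  rw [Fin.ext_iff, Fin.val_finset_sum, Fin.val_one', Nat.mod_eq_of_lt hk]

section muZero

variable {n k : ℕ} {α : Finset (Fin n)}

open scoped Classical in
theorem muZero_apply (s : Set ((i : α) → Fin k)) :
    muZero n k α s =
      #{x | x ∈ s ∧ (∑ i, (x i).val) % k = 1} * ((k : ℝ≥0∞) ^ (k - 1))⁻¹ := by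
  simp only [muZero, Measure.coe_finsetSum, Finset.sum_apply, Measure.smul_apply,
    Measure.dirac_apply, Set.indicator_apply, Pi.one_apply, smul_eq_mul, mul_ite, mul_one,
    mul_zero, ← ite_and]
  rw [← sum_filter, sum_const, nsmul_eq_mul]

theorem ae_muZero [NeZero k] (hk : 1 < k) : ∀ᵐ x ∂muZero n k α, ∑ i, x i = 1 := by
  classical
  rw [ae_iff, muZero_apply]
  simp only [Set.mem_ofPred_eq, Fin.sum_val_mod_eq_one_iff hk, not_and_self, filter_false,
    card_empty, Nat.cast_zero, zero_mul]

theorem map_restrict₂_erase_muZero [NeZero k] (hk : 1 < k) (hα : #α = k) {a : Fin n}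
    (ha : a ∈ α) :
    (muZero n k α).map (restrict₂ (π := fun _ => Fin k) (α.erase_subset a)) =
      Measure.pi fun _ : α.erase a => (PMF.uniformOfFintype (Fin k)).toMeasure := by
  classical
  refine Measure.ext_of_singleton fun z => ?_
  rw [Measure.map_apply (measurable_of_countable _) (measurableSet_singleton z), muZero_apply]
  simp only [Set.mem_preimage, Set.mem_singleton_iff, Fin.sum_val_mod_eq_one_iff hk]
  rw [card_filter_restrict₂_erase_eq_and_sum_eq ha, Nat.cast_one, one_mul, Measure.pi_singleton]
  simp only [PMF.toMeasure_apply_singleton _ _ (measurableSet_singleton _),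
    PMF.uniformOfFintype_apply, Fintype.card_fin, prod_const, card_univ, Fintype.card_coe,
    card_erase_of_mem ha, hα, ENNReal.inv_pow]

theorem map_restrict₂_muZero [NeZero k] (hk : 1 < k) (hα : #α = k) {S : Finset (Fin n)}
    (hS : S ⊆ α) (hSα : S ≠ α) :
    (muZero n k α).map (restrict₂ (π := fun _ => Fin k) hS) =
      Measure.pi fun _ : S => (PMF.uniformOfFintype (Fin k)).toMeasure := by
  obtain ⟨a, ha, haS⟩ := exists_of_ssubset (hS.ssubset_of_ne hSα)
  have hSa : S ⊆ α.erase a := fun i hi => mem_erase.2 ⟨fun h => haS (h ▸ hi), hS hi⟩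
  rw [← restrict₂_comp_restrict₂ hSa (α.erase_subset a),
    ← Measure.map_map (measurable_of_countable _) (measurable_of_countable _),
    map_restrict₂_erase_muZero hk hα ha,
    ← isProjectiveMeasureFamily_pi (fun _ : Fin n => (PMF.uniformOfFintype (Fin k)).toMeasure)]

theorem isProbabilityMeasure_muZero [NeZero k] (hk : 1 < k) (hα : #α = k) :
    IsProbabilityMeasure (muZero n k α) := by
  obtain ⟨a, ha⟩ := card_pos.1 (hα ▸ NeZero.pos k)
  have hmeas := measurable_of_countable (restrict₂ (π := fun _ => Fin k) (α.erase_subset a))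
  refine (Measure.isProbabilityMeasure_map_iff hmeas.aemeasurable).1 ?_
  rw [map_restrict₂_erase_muZero hk hα ha]
  infer_instance

theorem exists_forall_sum_eq_one_of_map_eq_muZero [NeZero k] (hk : 1 < k)
    {μ : Measure (Fin n → Fin k)} [IsProbabilityMeasure μ]
    (hμ : ∀ α : Finset (Fin n), #α = k → μ.map (fun x (i : α) => x i) = muZero n k α) :
    ∃ x : Fin n → Fin k, ∀ α : Finset (Fin n), #α = k → ∑ i ∈ α, x i = 1 := by
  have hae : ∀ᵐ x ∂μ, ∀ α : Finset (Fin n), #α = k → ∑ i ∈ α, x i = 1 := by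
    refine ae_all_iff.2 fun α => Filter.eventually_imp_distrib_left.2 fun hα => ?_
    have hmarg := ae_of_ae_map (measurable_of_countable _).aemeasurable
      ((hμ α hα).symm ▸ ae_muZero hk :
        ∀ᵐ y ∂μ.map (fun x (i : α) => x i), ∑ i, y i = 1)
    filter_upwards [hmarg] with x hx
    rwa [← sum_coe_sort]
  exact hae.exists

end muZero

/-- for `1 < k < n`, the family `μ_α = muZero n k α` (for `|α| = k`) consists of
probability measures and is consistent, yet admits no uniting probability measure;
in particular consistency is not sufficient for the existence of a uniting measure. -/
theorem statement0 (n k : ℕ) (hk : 1 < k) (hkn : k < n) :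
    (∀ α : Finset (Fin n), α.card = k → IsProbabilityMeasure (muZero n k α)) ∧
    (∀ α β : Finset (Fin n), α.card = k → β.card = k →
      Measure.map (fun (x : (i : α) → Fin k) (i : (α ∩ β : Finset (Fin n))) =>
          x ⟨i.1, Finset.mem_of_mem_inter_left i.2⟩) (muZero n k α) =
      Measure.map (fun (x : (i : β) → Fin k) (i : (α ∩ β : Finset (Fin n))) =>
          x ⟨i.1, Finset.mem_of_mem_inter_right i.2⟩) (muZero n k β)) ∧
    ¬ ∃ μ : Measure (Fin n → Fin k), IsProbabilityMeasure μ ∧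
        ∀ α : Finset (Fin n), α.card = k →
          Measure.map (fun (x : Fin n → Fin k) (i : α) => x i) μ = muZero n k α := by
  have : NeZero k := ⟨by omega⟩
  refine ⟨fun α hα => isProbabilityMeasure_muZero hk hα, fun α β hα hβ => ?_, ?_⟩
  · rcases eq_or_ne α β with rfl | hαβ
    · rfl
    have hcard : #α = #β := hα.trans hβ.symm
    exact (map_restrict₂_muZero hk hα inter_subset_left
        fun h => hαβ (eq_of_subset_of_card_le (inter_eq_left.1 h) hcard.ge)).trans
      (map_restrict₂_muZero hk hβ inter_subset_right
        fun h => hαβ (eq_of_subset_of_card_le (inter_eq_right.1 h) hcard.le).symm).symm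
  · rintro ⟨μ, hμ, hmarg⟩
    obtain ⟨x, hx⟩ := exists_forall_sum_eq_one_of_map_eq_muZero hk hmarg
    obtain ⟨g, hg⟩ :=
      exists_nsmul_eq_of_forall_card_sum_eq ((Fintype.card_fin n).symm ▸ hkn) hx
    have hzero : k • g = 0 := by simpa using card_nsmul_eq_zero (x := g)
    exact absurd (congrArg Fin.val (hzero.symm.trans hg)) (by simp [Nat.mod_eq_of_lt hk])
end

section
/- Let 1 ≤ k < n. There exist real numbers λ_0, λ_1, ..., λ_k, depending only on n and k, with the following property. Let X_1, ..., X_n be measurable spaces, let {μ_α}, indexed by subsets α ⊆ {1,...,n} of size k, be a consistent family of probability measures on the spaces X_α, and let ν_1, ..., ν_n be arbitrary probability measures on X_1, ..., X_n. For every subset β of size t ≤ k define μ_β = (pr_β)_*μ_α for any α ⊇ β of size k (well defined by consistency), define the extension μ̃_β = μ_β × ∏_{i∉β} ν_i on X = ∏_{i=1}^n X_i, and set μ̃_t = Σ_{|β|=t} μ̃_β. Then the signed measure μ = Σ_{t=0}^k λ_t μ̃_t satisfies (pr_α)_*μ = μ_α for every subset α of size k. -/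
/-!
Write `μ̃_β = extendPi β μ_β ν`. Its image under `pr_α` is `μ_{α ∩ β} ⊗ ∏_{i ∈ α \ β} ν_i`, which
depends on `β` only through `γ = α ∩ β`, and exactly `C(n - k, t - |γ|)` sets `β` of size `t`
meet `α` in `γ`. So `(pr_α)_* μ = Σ_{γ ⊆ α} c_γ (pr_α)_* μ̃_γ` with
`c_γ = Σ_t λ_t C(n - k, t - |γ|)`. Taking `λ_t` to be the coefficient of `x^(k - t)` in
`(1 + x)^(-(n - k))` makes `c_γ` the coefficient of `x^(k - |γ|)` in `1`, so only `γ = α`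
survives, and `(pr_α)_* μ̃_α = μ_α`.
-/

open Finset MeasureTheory

section Combinatorics

open PowerSeries

theorem card_filter_powersetCard_inter_eq {ι : Type*} [Fintype ι] [DecidableEq ι]
    {α γ : Finset ι} (hγ : γ ⊆ α) (t : ℕ) :
    #{β ∈ powersetCard t univ | α ∩ β = γ} =
      if #γ ≤ t then (Fintype.card ι - #α).choose (t - #γ) else 0 := by
  split_ifs with h
  · rw [← card_compl, ← card_powersetCard]
    refine card_nbij' (· \ α) (γ ∪ ·) ?_ ?_ ?_ ?_
    · intro β hβ
      simp only [coe_filter, mem_powersetCard_univ, Set.mem_ofPred_eq] at hβ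
      simp only [mem_coe, mem_powersetCard, ← hβ.2, card_sdiff, hβ.1]
      exact ⟨fun x hx => mem_compl.2 (mem_sdiff.1 hx).2, trivial⟩
    · intro δ hδ
      simp only [mem_coe, mem_powersetCard, subset_compl_iff_disjoint_right] at hδ
      have hγδ : Disjoint γ δ := (hδ.1.mono_right hγ).symm
      simp only [coe_filter, mem_powersetCard_univ, Set.mem_ofPred_eq, card_union_of_disjoint hγδ,
        hδ.2, inter_union_distrib_left, inter_eq_right.2 hγ,
        disjoint_iff_inter_eq_empty.1 hδ.1.symm, union_empty]
      exact ⟨by omega, trivial⟩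
    · intro β hβ
      simp only [coe_filter, mem_powersetCard_univ, Set.mem_ofPred_eq] at hβ
      simp only [← hβ.2]
      rw [inter_comm, union_comm, sdiff_union_inter]
    · intro δ hδ
      simp only [mem_coe, mem_powersetCard, subset_compl_iff_disjoint_right] at hδ
      simp only [union_sdiff_distrib, sdiff_eq_empty_iff_subset.2 hγ, empty_union,
        hδ.1.sdiff_eq_left]
  · rw [card_eq_zero, filter_eq_empty_iff]
    rintro β hβ rfl
    exact h ((card_le_card inter_subset_right).trans (mem_powersetCard_univ.1 hβ).le)

theorem PowerSeries.coeff_one_add_X_pow {R : Type*} [CommSemiring R] (m j : ℕ) :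
    coeff j ((1 + X : R⟦X⟧) ^ m) = m.choose j := by
  have : ((1 + X : R⟦X⟧) ^ m) = (((1 + Polynomial.X) ^ m : Polynomial R) : R⟦X⟧) := by simp
  rw [this, Polynomial.coeff_coe, Polynomial.coeff_one_add_X_pow]

theorem sum_range_coeff_inv_mul_choose {K : Type*} [Field K] (m k s : ℕ) :
    ∑ t ∈ range (k + 1), coeff (k - t) ((1 + X : K⟦X⟧) ^ m)⁻¹ *
      (if s ≤ t then (m.choose (t - s) : K) else 0) = if k = s then 1 else 0 := by
  have hunit : (X ^ s * (1 + X : K⟦X⟧) ^ m) * ((1 + X) ^ m)⁻¹ = X ^ s := by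
    rw [mul_assoc, PowerSeries.mul_inv_cancel _ (by simp), mul_one]
  rw [← coeff_X_pow k s, ← hunit, coeff_mul, Nat.sum_antidiagonal_eq_sum_range_succ
    (fun i j => coeff i (X ^ s * (1 + X : K⟦X⟧) ^ m) * coeff j ((1 + X) ^ m)⁻¹)]
  refine sum_congr rfl fun t _ => ?_
  rw [mul_comm, coeff_X_pow_mul', coeff_one_add_X_pow]

theorem sum_coeff_inv_mul_sum_powersetCard_inter {ι : Type*} [Fintype ι] [DecidableEq ι]
    {K : Type*} [Field K] (α : Finset ι) (g : Finset ι → K) :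
    ∑ t ∈ range (#α + 1), coeff (#α - t) ((1 + X : K⟦X⟧) ^ (Fintype.card ι - #α))⁻¹ *
      ∑ β ∈ powersetCard t univ, g (α ∩ β) = g α := by
  have hfiber (t : ℕ) : ∑ β ∈ powersetCard t univ, g (α ∩ β) = ∑ γ ∈ α.powerset,
      (if #γ ≤ t then ((Fintype.card ι - #α).choose (t - #γ) : K) else 0) * g γ := by
    rw [← sum_fiberwise_of_maps_to (g := (α ∩ ·)) fun β _ => mem_powerset.2 inter_subset_left]
    refine sum_congr rfl fun γ hγ => ?_
    rw [sum_congr rfl fun β hβ => congrArg g (mem_filter.1 hβ).2, sum_const,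
      card_filter_powersetCard_inter_eq (mem_powerset.1 hγ), nsmul_eq_mul, Nat.cast_ite,
      Nat.cast_zero]
  simp_rw [hfiber, mul_sum, ← mul_assoc]
  rw [sum_comm]
  simp_rw [← sum_mul, sum_range_coeff_inv_mul_choose]
  rw [sum_eq_single_of_mem α (mem_powerset_self α) fun γ hγ hne => ?_, if_pos rfl, one_mul]
  rw [if_neg fun h => hne (eq_of_subset_of_card_le (mem_powerset.1 hγ) h.le), zero_mul]

end Combinatorics

namespace MeasureTheory.Measure

variable {ι : Type*} [Fintype ι] [DecidableEq ι] {X : ι → Type*} [∀ i, MeasurableSpace (X i)]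

noncomputable def extendPi (β : Finset ι) (μ : Measure (∀ i : β, X i))
    (ν : ∀ i, Measure (X i)) : Measure (∀ i, X i) :=
  (μ.prod (Measure.pi fun i : {x // x ∉ β} => ν i)).map
    (Equiv.piEquivPiSubtypeProd (· ∈ β) X).symm

theorem extendPi_univ_pi (β : Finset ι) (μ : Measure (∀ i : β, X i)) (ν : ∀ i, Measure (X i))
    [∀ i, SigmaFinite (ν i)] {s : ∀ i, Set (X i)} (hs : ∀ i, MeasurableSet (s i)) :
    extendPi β μ ν (Set.univ.pi s) =
      μ (Set.univ.pi fun i : β => s i) * ∏ i ∈ βᶜ, ν i (s i) := by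
  rw [extendPi, map_apply (measurable_piEquivPiSubtypeProd_symm X _) (.univ_pi hs),
    Equiv.preimage_piEquivPiSubtypeProd_symm_pi, prod_prod, pi_pi]
  congr 1
  exact (prod_subtype _ (fun _ => mem_compl) fun i => ν i (s i)).symm

theorem extendPi_univ_pi_of_subset {β γ : Finset ι} (hγβ : γ ⊆ β)
    {μβ : Measure (∀ i : β, X i)} {μγ : Measure (∀ i : γ, X i)}
    (hμ : μγ = μβ.map (restrict₂ hγβ)) (ν : ∀ i, Measure (X i))
    [∀ i, IsProbabilityMeasure (ν i)] {s : ∀ i, Set (X i)} (hs : ∀ i, MeasurableSet (s i))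
    (hs_univ : ∀ i ∈ β \ γ, s i = Set.univ) :
    extendPi β μβ ν (Set.univ.pi s) = extendPi γ μγ ν (Set.univ.pi s) := by
  rw [extendPi_univ_pi β μβ ν hs, extendPi_univ_pi γ μγ ν hs, hμ,
    map_apply (measurable_restrict₂ hγβ) (.univ_pi fun i => hs i)]
  have hpre :
      restrict₂ hγβ ⁻¹' Set.univ.pi (fun i : γ => s i) = Set.univ.pi fun i : β => s i := by
    ext x
    simp only [Set.mem_preimage, Set.mem_univ_pi, restrict₂, Subtype.forall]
    grind
  rw [hpre, ← prod_subset (compl_subset_compl.2 hγβ) fun i hiγ hiβ => ?_]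
  rw [hs_univ i (mem_sdiff.2 ⟨notMem_compl.1 hiβ, mem_compl.1 hiγ⟩), measure_univ]

instance (β : Finset ι) (μ : Measure (∀ i : β, X i)) [IsFiniteMeasure μ]
    (ν : ∀ i, Measure (X i)) [∀ i, IsProbabilityMeasure (ν i)] :
    IsFiniteMeasure (extendPi β μ ν) := by
  unfold extendPi; infer_instance

theorem map_restrict_extendPi_of_subset {α β γ : Finset ι} (hγβ : γ ⊆ β) (hαβ : α ∩ β ⊆ γ)
    {μβ : Measure (∀ i : β, X i)} [IsFiniteMeasure μβ] {μγ : Measure (∀ i : γ, X i)}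
    (hμ : μγ = μβ.map (restrict₂ hγβ)) (ν : ∀ i, Measure (X i))
    [∀ i, IsProbabilityMeasure (ν i)] :
    (extendPi β μβ ν).map α.restrict = (extendPi γ μγ ν).map α.restrict := by
  have hbox (t : ∀ i : α, Set (X i)) (ht : ∀ i, MeasurableSet (t i)) :
      (extendPi β μβ ν).map α.restrict (Set.univ.pi t) =
        (extendPi γ μγ ν).map α.restrict (Set.univ.pi t) := by
    set s : ∀ i, Set (X i) := fun i => if h : i ∈ α then t ⟨i, h⟩ else Set.univ
    have hpre : α.restrict ⁻¹' Set.univ.pi t = Set.univ.pi s := by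
      ext x
      simp only [Set.mem_preimage, Set.mem_univ_pi, s]
      refine ⟨fun h i => ?_, fun h i => by simpa [i.2] using h i⟩
      split_ifs with hi
      exacts [h ⟨i, hi⟩, trivial]
    rw [map_apply (measurable_restrict α) (.univ_pi ht),
      map_apply (measurable_restrict α) (.univ_pi ht), hpre]
    refine extendPi_univ_pi_of_subset hγβ hμ ν (fun i => ?_) fun i hi => dif_neg fun hiα => ?_
    · by_cases h : i ∈ α <;> simp [s, h, ht]
    · exact (mem_sdiff.1 hi).2 (hαβ (mem_inter.2 ⟨hiα, (mem_sdiff.1 hi).1⟩))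
  refine ext_of_generate_finite _ generateFrom_pi.symm isPiSystem_pi ?_ ?_
  · rintro _ ⟨t, ht, rfl⟩
    exact hbox t (Set.mem_univ_pi.1 ht)
  · simpa using hbox (fun _ => Set.univ) fun _ => .univ

theorem map_restrict_extendPi_self (α : Finset ι) (μ : Measure (∀ i : α, X i))
    (ν : ∀ i, Measure (X i)) [∀ i, IsProbabilityMeasure (ν i)] :
    (extendPi α μ ν).map α.restrict = μ := by
  have hfst : α.restrict ∘ (Equiv.piEquivPiSubtypeProd (· ∈ α) X).symm = Prod.fst := by
    funext x
    ext i
    simp [i.2]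
  rw [extendPi, map_map (measurable_restrict α) (measurable_piEquivPiSubtypeProd_symm X _), hfst,
    map_fst_prod, measure_univ, one_smul]

end MeasureTheory.Measure

theorem MeasureTheory.map_restrict₂_of_consistent {ι : Type*} [Fintype ι] {X : ι → Type*}
    [∀ i, MeasurableSpace (X i)] {k : ℕ} (hk : k ≤ Fintype.card ι)
    {μ : ∀ β : Finset ι, Measure (∀ i : β, X i)}
    (hμ : ∀ α β (_ : #α = k) (h : β ⊆ α), μ β = (μ α).map (restrict₂ h))
    {β γ : Finset ι} (hβ : #β ≤ k) (hγβ : γ ⊆ β) :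
    μ γ = (μ β).map (restrict₂ hγβ) := by
  obtain ⟨δ, hβδ, hδ⟩ := exists_superset_card_eq hβ hk
  rw [hμ δ γ hδ (hγβ.trans hβδ), hμ δ β hδ hβδ,
    Measure.map_map (measurable_restrict₂ _) (measurable_restrict₂ _), restrict₂_comp_restrict₂]

theorem statement1_general (n k : ℕ) (hkn : k < n) :
    ∃ lam : ℕ → ℝ,
      ∀ (X : Fin n → Type) [inst : ∀ i, MeasurableSpace (X i)]
        (μ : (β : Finset (Fin n)) → Measure ((i : β) → X i))
        (ν : ∀ i, Measure (X i)),
        (∀ i, IsProbabilityMeasure (ν i)) →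
        (∀ β : Finset (Fin n), β.card ≤ k → IsProbabilityMeasure (μ β)) →
        (∀ (α β : Finset (Fin n)) (_ : α.card = k) (hsub : β ⊆ α),
          μ β = Measure.map
            (fun (x : (i : α) → X i) (i : β) => x ⟨i.1, hsub i.2⟩) (μ α)) →
        ∀ α : Finset (Fin n), α.card = k →
          ∀ A : Set ((i : α) → X i), MeasurableSet A →
            ∑ t ∈ Finset.range (k + 1), lam t *
              (∑ β ∈ Finset.powersetCard t (Finset.univ : Finset (Fin n)),
                (Measure.map (Equiv.piEquivPiSubtypeProd (fun i => i ∈ β) X).symm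
                    ((μ β).prod (Measure.pi fun i : {x : Fin n // x ∉ β} => ν i.1)))
                  ((fun (x : ∀ i, X i) (i : α) => x i) ⁻¹' A)).toReal
            = ((μ α) A).toReal := by
  refine ⟨fun t => PowerSeries.coeff (k - t) ((1 + PowerSeries.X : PowerSeries ℝ) ^ (n - k))⁻¹, ?_⟩
  intro X _ μ ν hν hprob hcons α hα A hA
  have hk_card : k ≤ Fintype.card (Fin n) := by simpa using hkn.le
  let g (γ : Finset (Fin n)) : ℝ := ((Measure.extendPi γ (μ γ) ν).map α.restrict A).toReal
  have hterm (t : ℕ) (ht : t ∈ range (k + 1)) :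
      (∑ β ∈ powersetCard t univ, Measure.extendPi β (μ β) ν (α.restrict ⁻¹' A)).toReal =
        ∑ β ∈ powersetCard t univ, g (α ∩ β) := by
    have hβk (β : Finset (Fin n)) (hβ : β ∈ powersetCard t univ) : #β ≤ k :=
      (mem_powersetCard_univ.1 hβ).le.trans (mem_range_succ_iff.1 ht)
    rw [ENNReal.toReal_sum fun β hβ => have := hprob β (hβk β hβ); measure_ne_top _ _]
    refine sum_congr rfl fun β hβ => ?_
    have := hprob β (hβk β hβ)
    rw [← Measure.map_apply (measurable_restrict α) hA, Measure.map_restrict_extendPi_of_subset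
      inter_subset_right subset_rfl (map_restrict₂_of_consistent hk_card hcons (hβk β hβ) _) ν]
  have hsum := sum_coeff_inv_mul_sum_powersetCard_inter α g
  simp only [hα, Fintype.card_fin, g, Measure.map_restrict_extendPi_self] at hsum
  rw [← hsum]
  exact sum_congr rfl fun t ht => by rw [← hterm t ht]; rfl

/-- there are coefficients `λ_0, …, λ_k`, depending only on `n` and `k`, such that
for any consistent family `{μ_β}` (given for all `β` with `|β| ≤ k`, compatible under
projections) and any probability measures `ν_i`, the signed measure
`μ = Σ_{t=0}^k λ_t μ̃_t`, where `μ̃_t = Σ_{|β|=t} μ_β × ∏_{i ∉ β} ν_i`, has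
`(pr_α)_* μ = μ_α` for every `α` of cardinality `k`, i.e. the signed combination of the
pushforwards agrees with `μ_α` on every measurable set. -/
theorem statement1 (n k : ℕ) (hk1 : 1 ≤ k) (hkn : k < n) :
    ∃ lam : ℕ → ℝ,
      ∀ (X : Fin n → Type) [inst : ∀ i, MeasurableSpace (X i)]
        (μ : (β : Finset (Fin n)) → Measure ((i : β) → X i))
        (ν : ∀ i, Measure (X i)),
        (∀ i, IsProbabilityMeasure (ν i)) →
        (∀ β : Finset (Fin n), β.card ≤ k → IsProbabilityMeasure (μ β)) →
        (∀ (α β : Finset (Fin n)) (_ : α.card = k) (hsub : β ⊆ α),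
          μ β = Measure.map
            (fun (x : (i : α) → X i) (i : β) => x ⟨i.1, hsub i.2⟩) (μ α)) →
        ∀ α : Finset (Fin n), α.card = k →
          ∀ A : Set ((i : α) → X i), MeasurableSet A →
            ∑ t ∈ Finset.range (k + 1), lam t *
              (∑ β ∈ Finset.powersetCard t (Finset.univ : Finset (Fin n)),
                (Measure.map (Equiv.piEquivPiSubtypeProd (fun i => i ∈ β) X).symm
                    ((μ β).prod (Measure.pi fun i : {x : Fin n // x ∉ β} => ν i.1)))
                  ((fun (x : ∀ i, X i) (i : α) => x i) ⁻¹' A)).toReal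
            = ((μ α) A).toReal :=
  statement1_general n k hkn
end

section
/- For all natural numbers 1 ≤ k < n there exists a constant λ_{nk} > 1 with the following property. Let X_1, ..., X_n be measurable spaces, {μ_α} a consistent family of probability measures on the spaces X_α (α ⊆ {1,...,n}, |α| = k), and ν_1, ..., ν_n probability measures on X_1, ..., X_n. Suppose every μ_α is absolutely continuous with respect to ν_α = ∏_{i∈α} ν_i with density ρ_α, and there exist constants 0 < m ≤ M such that m ≤ ρ_α ≤ M holds ν_α-almost everywhere for all α. If M/m ≤ λ_{nk}, then the set Π(μ_α) of uniting measures is nonempty. -/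
/-!
For `#δ ≤ k` the consistent family has a well-defined marginal `μ_δ` on `X_δ`, with a density
`g_δ` with respect to `ν_δ` satisfying `m ≤ g_δ ≤ M`. The uniting measure is `F • ν` with
`F x = ∑_{#γ ≤ k} ∑_{δ ⊆ γ} (-1)^{#(γ \ δ)} g_δ (x_δ)`.
Under `ν`, integrating `g_δ (x_δ)` over the coordinates outside `β` gives `g_{δ ∩ β} (x_{δ ∩ β})`;
the inner alternating sum then vanishes unless `γ ⊆ β`, and Möbius inversion on the subsets of `β`
shows that the `β`-marginal of `F • ν` is `μ_β`. The coefficients of `F` add up to `1` and there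
are at most `4 ^ n` pairs `δ ⊆ γ`, so `F ≥ m - 4 ^ n (M - m)`, which is nonnegative as soon as
`M / m ≤ 1 + 1 / 4 ^ n`.
-/

open MeasureTheory Finset
open scoped ENNReal

namespace UnitingMeasure

section Combinatorics

variable {ι R : Type*} [DecidableEq ι] [CommRing R]

def inclusionExclusionSum (𝒮 : Finset (Finset ι)) (f : Finset ι → R) : R :=
  ∑ γ ∈ 𝒮, ∑ δ ∈ γ.powerset, (-1) ^ #(γ \ δ) * f δ

theorem inclusionExclusionSum_congr {𝒮 : Finset (Finset ι)}
    (h𝒮 : IsLowerSet (𝒮 : Set (Finset ι))) {f f' : Finset ι → R} (h : ∀ δ ∈ 𝒮, f δ = f' δ) :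
    inclusionExclusionSum 𝒮 f = inclusionExclusionSum 𝒮 f' :=
  sum_congr rfl fun γ hγ => sum_congr rfl fun δ hδ => by
    rw [h δ (h𝒮 (mem_powerset.1 hδ) hγ)]

theorem sum_powerset_neg_one_pow_mul_inter_eq_zero {γ β : Finset ι} (hγβ : ¬γ ⊆ β)
    (T : Finset ι → R) :
    ∑ δ ∈ γ.powerset, (-1) ^ #(γ \ δ) * T (δ ∩ β) = 0 := by
  obtain ⟨j, hjγ, hjβ⟩ := not_subset.1 hγβ
  rw [← insert_erase hjγ, sum_powerset_insert (notMem_erase j γ), ← sum_add_distrib]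
  refine sum_eq_zero fun δ hδ => ?_
  have hjδ : j ∉ δ := fun h => notMem_erase j γ (mem_powerset.1 hδ h)
  rw [insert_sdiff_of_notMem _ hjδ, insert_sdiff_insert, sdiff_insert_of_notMem (notMem_erase j γ),
    card_insert_of_notMem (notMem_sdiff_of_notMem_left (notMem_erase j γ)),
    insert_inter_of_notMem hjβ, pow_succ]
  ring

theorem sum_powerset_sum_powerset_neg_one_pow_mul (β : Finset ι) (T : Finset ι → R) :
    ∑ γ ∈ β.powerset, ∑ δ ∈ γ.powerset, (-1) ^ #(γ \ δ) * T δ = T β := by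
  induction β using Finset.induction_on generalizing T with
  | empty => simp
  | insert j β hj ih =>
    have hsplit : ∀ γ ∈ β.powerset,
        ∑ δ ∈ γ.powerset, (-1) ^ #(γ \ δ) * T δ +
          ∑ δ ∈ (insert j γ).powerset, (-1) ^ #(insert j γ \ δ) * T δ =
        ∑ δ ∈ γ.powerset, (-1) ^ #(γ \ δ) * T (insert j δ) := by
      intro γ hγ
      have hjγ : j ∉ γ := fun h => hj (mem_powerset.1 hγ h)
      rw [sum_powerset_insert hjγ, ← add_assoc, ← sum_add_distrib, sum_eq_zero, zero_add]
      · refine sum_congr rfl fun δ _ => ?_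
        rw [insert_sdiff_insert, sdiff_insert_of_notMem hjγ]
      · intro δ hδ
        have hjδ : j ∉ δ := fun h => hjγ (mem_powerset.1 hδ h)
        rw [insert_sdiff_of_notMem _ hjδ, card_insert_of_notMem (notMem_sdiff_of_notMem_left hjγ),
          pow_succ]
        ring
    rw [sum_powerset_insert hj, ← sum_add_distrib, sum_congr rfl hsplit, ih]

theorem inclusionExclusionSum_inter {𝒮 : Finset (Finset ι)} (h𝒮 : IsLowerSet (𝒮 : Set (Finset ι)))
    {β : Finset ι} (hβ : β ∈ 𝒮) (T : Finset ι → R) :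
    inclusionExclusionSum 𝒮 (fun δ => T (δ ∩ β)) = T β := by
  unfold inclusionExclusionSum
  rw [← sum_filter_of_ne (p := (· ⊆ β)) fun γ _ hγ => by_contra fun hγβ =>
    hγ (sum_powerset_neg_one_pow_mul_inter_eq_zero hγβ T)]
  rw [show 𝒮.filter (· ⊆ β) = β.powerset by
    ext γ; simpa using fun hγβ => h𝒮 hγβ hβ]
  rw [← sum_powerset_sum_powerset_neg_one_pow_mul β T]
  refine sum_congr rfl fun γ hγ => sum_congr rfl fun δ hδ => ?_
  rw [inter_eq_left.2 ((mem_powerset.1 hδ).trans (mem_powerset.1 hγ))]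

theorem inclusionExclusionSum_one {𝒮 : Finset (Finset ι)} (h𝒮 : IsLowerSet (𝒮 : Set (Finset ι)))
    (h𝒮ne : 𝒮.Nonempty) : inclusionExclusionSum 𝒮 (fun _ => (1 : R)) = 1 := by
  obtain ⟨γ, hγ⟩ := h𝒮ne
  exact inclusionExclusionSum_inter (β := ∅) h𝒮 (h𝒮 (empty_subset γ) hγ) fun _ => 1

theorem abs_inclusionExclusionSum_le [Fintype ι] (𝒮 : Finset (Finset ι)) {f : Finset ι → ℝ}
    {c : ℝ} (hf : ∀ δ, |f δ| ≤ c) :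
    |inclusionExclusionSum 𝒮 f| ≤ 4 ^ Fintype.card ι * c := by
  have hc : 0 ≤ c := (abs_nonneg _).trans (hf ∅)
  calc |inclusionExclusionSum 𝒮 f|
      ≤ ∑ γ ∈ 𝒮, ∑ δ ∈ γ.powerset, |(-1) ^ #(γ \ δ) * f δ| :=
        (abs_sum_le_sum_abs _ _).trans (sum_le_sum fun γ _ => abs_sum_le_sum_abs _ _)
    _ ≤ ∑ γ ∈ (univ : Finset (Finset ι)), ∑ δ ∈ (univ : Finset (Finset ι)), c := by
        refine sum_le_sum_of_subset_of_nonneg (subset_univ 𝒮) (fun _ _ _ => sum_nonneg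
          fun _ _ => hc) |>.trans' (sum_le_sum fun γ _ => ?_)
        refine sum_le_sum_of_subset_of_nonneg (subset_univ _) (fun _ _ _ => hc) |>.trans'
          (sum_le_sum fun δ _ => ?_)
        simpa using hf δ
    _ = 4 ^ Fintype.card ι * c := by
        simp [Fintype.card_finset, ← mul_assoc, ← mul_pow]; norm_num

theorem sub_le_inclusionExclusionSum [Fintype ι] {𝒮 : Finset (Finset ι)}
    (h𝒮 : IsLowerSet (𝒮 : Set (Finset ι))) (h𝒮ne : 𝒮.Nonempty) {f : Finset ι → ℝ} {m M : ℝ}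
    (hf : ∀ δ, m ≤ f δ ∧ f δ ≤ M) :
    m - 4 ^ Fintype.card ι * (M - m) ≤ inclusionExclusionSum 𝒮 f := by
  have hsub : inclusionExclusionSum 𝒮 f - m = inclusionExclusionSum 𝒮 (fun δ => f δ - m) := by
    conv_lhs => rw [← mul_one m, ← inclusionExclusionSum_one h𝒮 h𝒮ne]
    simp only [inclusionExclusionSum, mul_sum, ← sum_sub_distrib]
    exact sum_congr rfl fun _ _ => sum_congr rfl fun _ _ => by ring
  have := abs_inclusionExclusionSum_le 𝒮 (f := fun δ => f δ - m) (c := M - m)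
    fun δ => abs_le.2 ⟨by linarith [hf δ], by linarith [hf δ]⟩
  linarith [(abs_le.1 this).1]

end Combinatorics

theorem isLowerSet_filter_card_le {ι : Type*} [Fintype ι] (k : ℕ) :
    IsLowerSet ((univ.filter fun δ : Finset ι => #δ ≤ k : Finset (Finset ι)) : Set (Finset ι)) :=
  fun _ δ hδγ hγ => mem_filter.2 ⟨mem_univ δ, (card_le_card hδγ).trans (mem_filter.1 hγ).2⟩

theorem exists_superset_card_eq {ι : Type*} [Fintype ι] {k : ℕ} (hk : k ≤ Fintype.card ι)
    {δ : Finset ι} (hδ : #δ ≤ k) : ∃ α, δ ⊆ α ∧ #α = k := by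
  obtain ⟨α, hδα, -, hα⟩ := exists_subsuperset_card_eq (subset_univ δ) hδ (by simpa using hk)
  exact ⟨α, hδα, hα⟩

section Density

variable {Ω Ω' : Type*} [MeasurableSpace Ω] [MeasurableSpace Ω']

theorem map_withDensity_comp {μ : Measure Ω} {g : Ω → Ω'} (hg : Measurable g)
    {f : Ω' → ℝ≥0∞} (hf : Measurable f) :
    (μ.withDensity (f ∘ g)).map g = (μ.map g).withDensity f := by
  ext s hs
  rw [Measure.map_apply hg hs, withDensity_apply _ (hg hs), withDensity_apply _ hs,
    setLIntegral_map hs hf hg]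
  rfl

theorem smul_le_withDensity_of_ae_le {Q : Measure Ω} {ρ : Ω → ℝ≥0∞} {a : ℝ≥0∞}
    (h : ∀ᵐ x ∂Q, a ≤ ρ x) : a • Q ≤ Q.withDensity ρ := by
  rw [← withDensity_const]; exact withDensity_mono h

theorem withDensity_le_smul_of_ae_le {Q : Measure Ω} {ρ : Ω → ℝ≥0∞} {b : ℝ≥0∞}
    (h : ∀ᵐ x ∂Q, ρ x ≤ b) : Q.withDensity ρ ≤ b • Q := by
  rw [← withDensity_const]; exact withDensity_mono h

theorem exists_withDensity_eq_of_smul_le_of_le_smul {P Q : Measure Ω} [SigmaFinite P]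
    [SigmaFinite Q] {a b : ℝ≥0∞} (hab : a ≤ b) (hlow : a • Q ≤ P) (hup : P ≤ b • Q) :
    ∃ g : Ω → ℝ≥0∞, Measurable g ∧ (∀ x, a ≤ g x ∧ g x ≤ b) ∧ Q.withDensity g = P := by
  have hPQ : Q.withDensity (P.rnDeriv Q) = P :=
    Measure.withDensity_rnDeriv_eq _ _ (Measure.absolutelyContinuous_of_le_smul hup)
  have hle : P.rnDeriv Q ≤ᵐ[Q] fun _ => b :=
    ae_le_of_forall_setLIntegral_le_of_sigmaFinite (Measure.measurable_rnDeriv _ _) fun s hs _ => by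
      rw [← withDensity_apply _ hs, hPQ, setLIntegral_const]
      simpa using hup s
  have hge : (fun _ => a) ≤ᵐ[Q] P.rnDeriv Q :=
    ae_le_of_forall_setLIntegral_le_of_sigmaFinite measurable_const fun s hs _ => by
      rw [setLIntegral_const, ← withDensity_apply _ hs, hPQ]
      simpa using hlow s
  refine ⟨fun x => min b (max a (P.rnDeriv Q x)),
    measurable_const.min (measurable_const.max (Measure.measurable_rnDeriv _ _)),
    fun x => ⟨le_min hab (le_max_left _ _), min_le_left _ _⟩, ?_⟩
  refine (withDensity_congr_ae ?_).trans hPQ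
  filter_upwards [hle, hge] with x hxb hxa
  rw [max_eq_right hxa, min_eq_right hxb]

variable {ι : Type*} [DecidableEq ι]

theorem integrable_inclusionExclusionSum {ν : Measure Ω} (𝒮 : Finset (Finset ι))
    {f : Finset ι → Ω → ℝ} (hf : ∀ δ, Integrable (f δ) ν) :
    Integrable (fun x => inclusionExclusionSum 𝒮 fun δ => f δ x) ν :=
  integrable_finsetSum _ fun _ _ => integrable_finsetSum _ fun δ _ => (hf δ).const_mul _

theorem integral_inclusionExclusionSum {ν : Measure Ω} (𝒮 : Finset (Finset ι))
    {f : Finset ι → Ω → ℝ} (hf : ∀ δ, Integrable (f δ) ν) :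
    ∫ x, inclusionExclusionSum 𝒮 (fun δ => f δ x) ∂ν =
      inclusionExclusionSum 𝒮 (fun δ => ∫ x, f δ x ∂ν) := by
  simp only [inclusionExclusionSum]
  rw [integral_finsetSum _ fun γ _ => integrable_finsetSum _ fun δ _ => (hf δ).const_mul _]
  refine sum_congr rfl fun γ _ => ?_
  rw [integral_finsetSum _ fun δ _ => (hf δ).const_mul _]
  exact sum_congr rfl fun δ _ => integral_const_mul _ _

theorem map_withDensity_inclusionExclusionSum {ν : Measure Ω} [IsFiniteMeasure ν]
    {𝒮 : Finset (Finset ι)} (h𝒮 : IsLowerSet (𝒮 : Set (Finset ι))) {G : Finset ι → Ω → ℝ≥0∞}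
    (hG : ∀ δ, Measurable (G δ)) {b : ℝ≥0∞} (hb : b ≠ ∞) (hGb : ∀ δ x, G δ x ≤ b)
    (hF : ∀ x, 0 ≤ inclusionExclusionSum 𝒮 fun δ => (G δ x).toReal)
    {f : Ω → Ω'} (hf : Measurable f) {β : Finset ι} (hβ : β ∈ 𝒮)
    (hfβ : ∀ δ ∈ 𝒮, (ν.withDensity (G δ)).map f = (ν.withDensity (G (δ ∩ β))).map f) :
    (ν.withDensity fun x => ENNReal.ofReal (inclusionExclusionSum 𝒮 fun δ => (G δ x).toReal)).map f
      = (ν.withDensity (G β)).map f := by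
  ext S hS
  set A := f ⁻¹' S
  have hInt : ∀ δ, Integrable (fun x => (G δ x).toReal) (ν.restrict A) := fun δ =>
    .of_bound (hG δ).ennreal_toReal.aestronglyMeasurable b.toReal (ae_of_all _ fun x => by
      rw [Real.norm_of_nonneg ENNReal.toReal_nonneg]; exact ENNReal.toReal_mono hb (hGb δ x))
  have hT : ∀ δ, ∫ x in A, (G δ x).toReal ∂ν = ((ν.withDensity (G δ)).map f S).toReal :=
    fun δ => by
      rw [integral_toReal (hG δ).aemeasurable (ae_of_all _ fun x => (hGb δ x).trans_lt hb.lt_top),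
        Measure.map_apply hf hS, withDensity_apply _ (hf hS)]
  rw [Measure.map_apply hf hS, withDensity_apply _ (hf hS), ← ofReal_integral_eq_lintegral_ofReal
    (integrable_inclusionExclusionSum 𝒮 hInt) (ae_of_all _ hF),
    integral_inclusionExclusionSum _ hInt,
    inclusionExclusionSum_congr h𝒮 fun δ hδ => by rw [hT, hfβ δ hδ],
    inclusionExclusionSum_inter h𝒮 hβ fun ε => ((ν.withDensity (G ε)).map f S).toReal, ← hT,
    ofReal_integral_eq_lintegral_ofReal (hInt β) (ae_of_all _ fun _ => ENNReal.toReal_nonneg),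
    Measure.map_apply hf hS, withDensity_apply _ (hf hS)]
  exact lintegral_congr fun x => ENNReal.ofReal_toReal ((hGb β x).trans_lt hb.lt_top).ne

end Density

section Extension

variable {ι : Type*} [DecidableEq ι] {X : ι → Type*} [∀ i, MeasurableSpace (X i)]

theorem restrict_piEquivPiSubtypeProd_symm_apply (δ : Finset ι)
    (z : (∀ i : δ, X i) × (∀ i : {i // i ∉ δ}, X i)) :
    δ.restrict ((MeasurableEquiv.piEquivPiSubtypeProd X (· ∈ δ)).symm z) = z.1 := by
  funext i
  simp [MeasurableEquiv.piEquivPiSubtypeProd, Equiv.piEquivPiSubtypeProd, i.2]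

variable [Fintype ι]

noncomputable def piExtend (ν : ∀ i, Measure (X i)) (δ : Finset ι) (P : Measure (∀ i : δ, X i)) :
    Measure (∀ i, X i) :=
  (P.prod (Measure.pi fun i : {i // i ∉ δ} => ν i)).map
    (MeasurableEquiv.piEquivPiSubtypeProd X (· ∈ δ)).symm

variable (ν : ∀ i, Measure (X i))

instance [∀ i, IsFiniteMeasure (ν i)] (δ : Finset ι) (P : Measure (∀ i : δ, X i))
    [IsFiniteMeasure P] : IsFiniteMeasure (piExtend ν δ P) := by
  unfold piExtend; infer_instance

theorem pi_withDensity_comp_restrict [∀ i, SigmaFinite (ν i)] (δ : Finset ι)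
    {g : (∀ i : δ, X i) → ℝ≥0∞} (hg : Measurable g) :
    (Measure.pi ν).withDensity (g ∘ δ.restrict) =
      piExtend ν δ ((Measure.pi fun i : δ => ν i).withDensity g) := by
  set e := MeasurableEquiv.piEquivPiSubtypeProd X (· ∈ δ)
  have hν : Measure.pi ν = ((Measure.pi fun i : δ => ν i).prod
      (Measure.pi fun i : {i // i ∉ δ} => ν i)).map e.symm := by
    convert ((measurePreserving_piEquivPiSubtypeProd ν (· ∈ δ)).symm _).map_eq.symm
  have hcomp : g ∘ δ.restrict ∘ e.symm = g ∘ Prod.fst :=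
    funext fun z => congrArg g (restrict_piEquivPiSubtypeProd_symm_apply δ z)
  rw [piExtend, prod_withDensity_left hg, hν, ← map_withDensity_comp e.symm.measurable
    (hg.comp (Finset.measurable_restrict δ)), Function.comp_assoc, hcomp]
  rfl

theorem map_restrict_piExtend [∀ i, IsProbabilityMeasure (ν i)] (δ : Finset ι)
    (P : Measure (∀ i : δ, X i)) [SFinite P] :
    (piExtend ν δ P).map δ.restrict = P := by
  rw [piExtend, Measure.map_map (Finset.measurable_restrict δ) (MeasurableEquiv.measurable _)]
  have hfst : δ.restrict ∘ (MeasurableEquiv.piEquivPiSubtypeProd X (· ∈ δ)).symm = Prod.fst :=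
    funext (restrict_piEquivPiSubtypeProd_symm_apply δ)
  rw [hfst, Measure.map_fst_prod, measure_univ, one_smul]

theorem piExtend_apply_pi [∀ i, SigmaFinite (ν i)] (δ : Finset ι) (P : Measure (∀ i : δ, X i))
    [SFinite P] {s : ∀ i, Set (X i)} (hs : ∀ i, MeasurableSet (s i)) :
    piExtend ν δ P (Set.univ.pi s) =
      P (Set.univ.pi fun i : δ => s i) * ∏ i ∈ δᶜ, ν i (s i) := by
  rw [piExtend, Measure.map_apply (MeasurableEquiv.measurable _) (MeasurableSet.univ_pi hs)]
  have hpre : (MeasurableEquiv.piEquivPiSubtypeProd X (· ∈ δ)).symm ⁻¹' Set.univ.pi s =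
      (Set.univ.pi fun i : δ => s i) ×ˢ Set.univ.pi fun i : {i // i ∉ δ} => s i :=
    Equiv.preimage_piEquivPiSubtypeProd_symm_pi (· ∈ δ) s
  rw [hpre, Measure.prod_prod, Measure.pi_pi]
  congr 1
  exact (prod_subtype δᶜ (fun i => by simp) fun i => ν i (s i)).symm

theorem piExtend_apply_pi_eq_inter [∀ i, IsProbabilityMeasure (ν i)] {δ β : Finset ι}
    (P : Measure (∀ i : δ, X i)) [SFinite P] {s : ∀ i, Set (X i)}
    (hs : ∀ i, MeasurableSet (s i)) (hsδ : ∀ i ∈ δ, i ∉ β → s i = Set.univ) :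
    piExtend ν δ P (Set.univ.pi s) =
      piExtend ν (δ ∩ β) (P.map (restrict₂ inter_subset_left)) (Set.univ.pi s) := by
  rw [piExtend_apply_pi ν _ _ hs, piExtend_apply_pi ν _ _ hs,
    Measure.map_apply (measurable_restrict₂ _) (MeasurableSet.univ_pi fun i => hs i)]
  congr 1
  · congr 1
    ext x
    simp only [Set.mem_pi, Set.mem_univ, true_implies, Set.mem_preimage, restrict₂, Subtype.forall]
    refine ⟨fun h i hi => h i (mem_inter.1 hi).1, fun h i hi => ?_⟩
    by_cases hiβ : i ∈ β
    · exact h i (mem_inter.2 ⟨hi, hiβ⟩)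
    · rw [hsδ i hi hiβ]; trivial
  · refine prod_subset (compl_subset_compl.2 inter_subset_left) fun i hi hiδ => ?_
    simp only [mem_compl, mem_inter, not_and, not_not] at hi hiδ
    rw [hsδ i hiδ (hi hiδ), measure_univ]

theorem map_restrict_piExtend_eq_inter [∀ i, IsProbabilityMeasure (ν i)] {δ β : Finset ι}
    (P : Measure (∀ i : δ, X i)) [IsFiniteMeasure P] :
    (piExtend ν δ P).map β.restrict =
      (piExtend ν (δ ∩ β) (P.map (restrict₂ inter_subset_left))).map β.restrict := by
  refine ext_of_generate_finite _ generateFrom_pi.symm isPiSystem_pi ?_ ?_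
  · rintro _ ⟨t, ht, rfl⟩
    have ht' : ∀ i, MeasurableSet (t i) := fun i => ht i (Set.mem_univ i)
    rw [Measure.map_apply (measurable_restrict β) (MeasurableSet.univ_pi ht'),
      Measure.map_apply (measurable_restrict β) (MeasurableSet.univ_pi ht')]
    have hpre : β.restrict ⁻¹' Set.univ.pi t =
        Set.univ.pi fun i => if h : i ∈ β then t ⟨i, h⟩ else Set.univ := by
      ext x
      simp only [Set.mem_preimage, Set.mem_univ_pi, Finset.restrict, Subtype.forall]
      exact ⟨fun h i => by split_ifs with hi; exacts [h i hi, trivial],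
        fun h i hi => by simpa [hi] using h i⟩
    rw [hpre]
    refine piExtend_apply_pi_eq_inter ν P (fun i => ?_) fun i _ hi => dif_neg hi
    split_ifs with hi
    exacts [ht' _, MeasurableSet.univ]
  · rw [Measure.map_apply (measurable_restrict β) MeasurableSet.univ,
      Measure.map_apply (measurable_restrict β) MeasurableSet.univ, Set.preimage_univ,
      ← Set.pi_univ]
    exact piExtend_apply_pi_eq_inter ν P (fun _ => MeasurableSet.univ) fun _ _ _ => rfl

end Extension

section Marginal

variable {ι : Type*} [DecidableEq ι] {X : ι → Type*} [∀ i, MeasurableSpace (X i)]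
  {k : ℕ} {μ : (α : Finset ι) → Measure (∀ i : α, X i)}

def IsConsistent (k : ℕ) (μ : (α : Finset ι) → Measure (∀ i : α, X i)) : Prop :=
  ∀ α β : Finset ι, #α = k → #β = k →
    (μ α).map (restrict₂ inter_subset_left) = (μ β).map (restrict₂ inter_subset_right)

open Classical in
noncomputable def marginal (k : ℕ) (μ : (α : Finset ι) → Measure (∀ i : α, X i))
    (δ : Finset ι) : Measure (∀ i : δ, X i) :=
  if h : ∃ α, δ ⊆ α ∧ #α = k then (μ h.choose).map (restrict₂ h.choose_spec.1) else 0

theorem IsConsistent.map_restrict₂_eq (hμ : IsConsistent k μ) {δ α β : Finset ι}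
    (hα : #α = k) (hβ : #β = k) (hδα : δ ⊆ α) (hδβ : δ ⊆ β) :
    (μ α).map (restrict₂ hδα) = (μ β).map (restrict₂ hδβ) := by
  have hδ : δ ⊆ α ∩ β := subset_inter hδα hδβ
  rw [← restrict₂_comp_restrict₂ hδ inter_subset_left,
    ← restrict₂_comp_restrict₂ hδ inter_subset_right,
    ← Measure.map_map (measurable_restrict₂ _) (measurable_restrict₂ _),
    ← Measure.map_map (measurable_restrict₂ _) (measurable_restrict₂ _), hμ α β hα hβ]

theorem marginal_eq (hμ : IsConsistent k μ) {δ α : Finset ι} (hδα : δ ⊆ α) (hα : #α = k) :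
    marginal k μ δ = (μ α).map (restrict₂ hδα) := by
  have h : ∃ α, δ ⊆ α ∧ #α = k := ⟨α, hδα, hα⟩
  rw [marginal, dif_pos h]
  exact hμ.map_restrict₂_eq h.choose_spec.2 hα _ _

theorem marginal_eq_self (hμ : IsConsistent k μ) {α : Finset ι} (hα : #α = k) :
    marginal k μ α = μ α := by
  rw [marginal_eq hμ subset_rfl hα]
  exact Measure.map_id

theorem map_restrict₂_marginal (hμ : IsConsistent k μ) {ε δ α : Finset ι} (hεδ : ε ⊆ δ)
    (hδα : δ ⊆ α) (hα : #α = k) :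
    (marginal k μ δ).map (restrict₂ hεδ) = marginal k μ ε := by
  rw [marginal_eq hμ hδα hα, marginal_eq hμ (hεδ.trans hδα) hα,
    Measure.map_map (measurable_restrict₂ _) (measurable_restrict₂ _)]
  rfl

theorem isProbabilityMeasure_marginal (hprob : ∀ α, #α = k → IsProbabilityMeasure (μ α))
    (hμ : IsConsistent k μ) {δ α : Finset ι} (hδα : δ ⊆ α) (hα : #α = k) :
    IsProbabilityMeasure (marginal k μ δ) := by
  have := hprob α hα
  rw [marginal_eq hμ hδα hα]
  exact Measure.isProbabilityMeasure_map (measurable_restrict₂ _).aemeasurable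

variable {ν : ∀ i, Measure (X i)} [∀ i, IsProbabilityMeasure (ν i)]

theorem smul_le_marginal_and_marginal_le_smul {a b : ℝ≥0∞} (hμ : IsConsistent k μ)
    (hbd : ∀ α, #α = k →
      a • Measure.pi (fun i : α => ν i) ≤ μ α ∧ μ α ≤ b • Measure.pi (fun i : α => ν i))
    {δ α : Finset ι} (hδα : δ ⊆ α) (hα : #α = k) :
    a • Measure.pi (fun i : δ => ν i) ≤ marginal k μ δ ∧
      marginal k μ δ ≤ b • Measure.pi (fun i : δ => ν i) := by
  have hν : Measure.pi (fun i : δ => ν i) = (Measure.pi fun i : α => ν i).map (restrict₂ hδα) :=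
    isProjectiveMeasureFamily_pi ν α δ hδα
  rw [marginal_eq hμ hδα hα, hν, ← Measure.map_smul, ← Measure.map_smul]
  exact ⟨Measure.map_mono (hbd α hα).1 (measurable_restrict₂ _),
    Measure.map_mono (hbd α hα).2 (measurable_restrict₂ _)⟩

variable [Fintype ι]

theorem exists_bounded_density_marginal (hk : k ≤ Fintype.card ι) {a b : ℝ≥0∞} (hab : a ≤ b)
    (hprob : ∀ α, #α = k → IsProbabilityMeasure (μ α)) (hμ : IsConsistent k μ)
    (hbd : ∀ α, #α = k →
      a • Measure.pi (fun i : α => ν i) ≤ μ α ∧ μ α ≤ b • Measure.pi (fun i : α => ν i))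
    (δ : Finset ι) :
    ∃ g : (∀ i : δ, X i) → ℝ≥0∞, Measurable g ∧ (∀ x, a ≤ g x ∧ g x ≤ b) ∧
      (#δ ≤ k → (Measure.pi fun i : δ => ν i).withDensity g = marginal k μ δ) := by
  by_cases hδ : #δ ≤ k
  · obtain ⟨α, hδα, hα⟩ := exists_superset_card_eq hk hδ
    have := isProbabilityMeasure_marginal hprob hμ hδα hα
    obtain ⟨hlow, hup⟩ := smul_le_marginal_and_marginal_le_smul hμ hbd hδα hα
    obtain ⟨g, hg, hgb, hgP⟩ := exists_withDensity_eq_of_smul_le_of_le_smul hab hlow hup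
    exact ⟨g, hg, hgb, fun _ => hgP⟩
  · exact ⟨fun _ => a, measurable_const, fun _ => ⟨le_rfl, hab⟩, fun h => absurd h hδ⟩

theorem map_restrict_piExtend_marginal_eq_inter (hk : k ≤ Fintype.card ι)
    (hprob : ∀ α, #α = k → IsProbabilityMeasure (μ α)) (hμ : IsConsistent k μ) {δ : Finset ι}
    (hδ : #δ ≤ k) (β : Finset ι) :
    (piExtend ν δ (marginal k μ δ)).map β.restrict =
      (piExtend ν (δ ∩ β) (marginal k μ (δ ∩ β))).map β.restrict := by
  obtain ⟨α, hδα, hα⟩ := exists_superset_card_eq hk hδ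
  have := isProbabilityMeasure_marginal hprob hμ hδα hα
  rw [map_restrict_piExtend_eq_inter, map_restrict₂_marginal hμ _ hδα hα]

end Marginal

section Construction

variable {ι : Type*} [Fintype ι] [DecidableEq ι] {X : ι → Type*} [∀ i, MeasurableSpace (X i)]
  {ν : ∀ i, Measure (X i)} [∀ i, IsProbabilityMeasure (ν i)]
  {k : ℕ} {μ : (α : Finset ι) → Measure (∀ i : α, X i)}

noncomputable def inclusionExclusionDensity (k : ℕ) (g : ∀ δ : Finset ι, (∀ i : δ, X i) → ℝ≥0∞)
    (x : ∀ i, X i) : ℝ :=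
  inclusionExclusionSum (univ.filter fun δ : Finset ι => #δ ≤ k) fun δ =>
    (g δ (δ.restrict x)).toReal

theorem map_restrict_withDensity_inclusionExclusionDensity (hk : k ≤ Fintype.card ι)
    (hprob : ∀ α, #α = k → IsProbabilityMeasure (μ α)) (hμ : IsConsistent k μ)
    {g : ∀ δ : Finset ι, (∀ i : δ, X i) → ℝ≥0∞} (hg : ∀ δ, Measurable (g δ)) {b : ℝ≥0∞}
    (hb : b ≠ ∞) (hgb : ∀ δ x, g δ x ≤ b)
    (hg_dens : ∀ δ, #δ ≤ k → (Measure.pi fun i : δ => ν i).withDensity (g δ) = marginal k μ δ)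
    (hF : ∀ x, 0 ≤ inclusionExclusionDensity k g x) {β : Finset ι} (hβ : #β ≤ k) :
    ((Measure.pi ν).withDensity fun x => ENNReal.ofReal (inclusionExclusionDensity k g x)).map
      β.restrict = marginal k μ β := by
  have hQ : ∀ δ, #δ ≤ k →
      (Measure.pi ν).withDensity (fun x => g δ (δ.restrict x)) = piExtend ν δ (marginal k μ δ) :=
    fun δ hδ => by rw [← hg_dens δ hδ, ← pi_withDensity_comp_restrict ν δ (hg δ)]; rfl
  obtain ⟨α, hβα, hα⟩ := exists_superset_card_eq hk hβ
  have := isProbabilityMeasure_marginal hprob hμ hβα hα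
  unfold inclusionExclusionDensity at hF ⊢
  rw [map_withDensity_inclusionExclusionSum (isLowerSet_filter_card_le k)
    (G := fun δ x => g δ (δ.restrict x)) (fun δ => (hg δ).comp (measurable_restrict δ)) hb
    (fun δ x => hgb δ _) hF (measurable_restrict β) (by simpa using hβ), hQ β hβ,
    map_restrict_piExtend]
  intro δ hδ
  have hδ : #δ ≤ k := by simpa using hδ
  rw [hQ δ hδ, hQ _ ((card_le_card inter_subset_left).trans hδ),
    map_restrict_piExtend_marginal_eq_inter hk hprob hμ hδ]

theorem exists_uniting_measure {m M : ℝ} (hmM : m ≤ M)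
    (hgap : 4 ^ Fintype.card ι * (M - m) ≤ m) (hk : k ≤ Fintype.card ι)
    (hprob : ∀ α, #α = k → IsProbabilityMeasure (μ α)) (hμ : IsConsistent k μ)
    (hbd : ∀ α, #α = k → ENNReal.ofReal m • Measure.pi (fun i : α => ν i) ≤ μ α ∧
      μ α ≤ ENNReal.ofReal M • Measure.pi (fun i : α => ν i)) :
    ∃ π : Measure (∀ i, X i), IsProbabilityMeasure π ∧ ∀ α, #α = k → π.map α.restrict = μ α := by
  choose g hg hgb hg_dens using
    exists_bounded_density_marginal hk (ENNReal.ofReal_le_ofReal hmM) hprob hμ hbd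
  have hm : 0 ≤ m := by nlinarith [pow_pos (four_pos : (0 : ℝ) < 4) (Fintype.card ι)]
  have hg_real : ∀ δ y, m ≤ (g δ y).toReal ∧ (g δ y).toReal ≤ M := fun δ y =>
    ⟨(ENNReal.ofReal_le_iff_le_toReal ((hgb δ y).2.trans_lt ENNReal.ofReal_lt_top).ne).1
      (hgb δ y).1, ENNReal.toReal_le_of_le_ofReal (hm.trans hmM) (hgb δ y).2⟩
  have hF : ∀ x, 0 ≤ inclusionExclusionDensity k g x := fun x =>
    (sub_le_inclusionExclusionSum (isLowerSet_filter_card_le k) ⟨∅, by simp⟩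
      fun δ => hg_real δ (δ.restrict x)).trans' (by linarith)
  have hmarg : ∀ α, #α = k → ((Measure.pi ν).withDensity fun x =>
      ENNReal.ofReal (inclusionExclusionDensity k g x)).map α.restrict = μ α := fun α hα =>
    (map_restrict_withDensity_inclusionExclusionDensity hk hprob hμ hg ENNReal.ofReal_ne_top
      (fun δ x => (hgb δ x).2) hg_dens hF hα.le).trans (marginal_eq_self hμ hα)
  refine ⟨_, ⟨?_⟩, hmarg⟩
  obtain ⟨β, -, hβ⟩ := exists_subset_card_eq (s := (univ : Finset ι)) (by simpa using hk)
  have := hprob β hβ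
  rw [← Set.preimage_univ (f := β.restrict), ← Measure.map_apply (measurable_restrict β) .univ,
    hmarg β hβ, measure_univ]

end Construction

end UnitingMeasure

open UnitingMeasure

theorem statement3_general (n k : ℕ) (hkn : k < n) :
    ∃ lam : ℝ, 1 < lam ∧
      ∀ (X : Fin n → Type) [inst : ∀ i, MeasurableSpace (X i)]
        (μ : (α : Finset (Fin n)) → Measure ((i : α) → X i))
        (ν : ∀ i, Measure (X i)),
        (∀ i, IsProbabilityMeasure (ν i)) →
        (∀ α : Finset (Fin n), α.card = k → IsProbabilityMeasure (μ α)) →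
        (∀ (α β : Finset (Fin n)), α.card = k → β.card = k →
          Measure.map (fun (x : (i : α) → X i) (i : (α ∩ β : Finset (Fin n))) =>
              x ⟨i.1, Finset.mem_of_mem_inter_left i.2⟩) (μ α) =
          Measure.map (fun (x : (i : β) → X i) (i : (α ∩ β : Finset (Fin n))) =>
              x ⟨i.1, Finset.mem_of_mem_inter_right i.2⟩) (μ β)) →
        ∀ m M : ℝ, 0 < m → m ≤ M → M / m ≤ lam →
        (∀ α : Finset (Fin n), α.card = k →
          ∃ ρ : ((i : α) → X i) → ℝ≥0∞,
            μ α = (Measure.pi fun i : α => ν i).withDensity ρ ∧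
            ∀ᵐ x ∂(Measure.pi fun i : α => ν i),
              ENNReal.ofReal m ≤ ρ x ∧ ρ x ≤ ENNReal.ofReal M) →
        ∃ π : Measure (∀ i, X i), IsProbabilityMeasure π ∧
          ∀ α : Finset (Fin n), α.card = k →
            Measure.map (fun (x : ∀ i, X i) (i : α) => x i) π = μ α := by
  refine ⟨1 + (4 ^ n)⁻¹, lt_add_of_pos_right 1 (by positivity), ?_⟩
  intro X _ μ ν hν hprob hcons m M hm hmM hlam hdens
  have hgap : 4 ^ Fintype.card (Fin n) * (M - m) ≤ m := by
    have hM : M - m ≤ (4 ^ n)⁻¹ * m := by linarith [(div_le_iff₀ hm).1 hlam]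
    calc 4 ^ Fintype.card (Fin n) * (M - m) ≤ 4 ^ n * ((4 ^ n)⁻¹ * m) := by
          rw [Fintype.card_fin]; gcongr
      _ = m := by field_simp
  exact exists_uniting_measure hmM hgap (by simpa using hkn.le) hprob hcons fun α hα => by
    obtain ⟨ρ, hρ, hbd⟩ := hdens α hα
    rw [hρ]
    exact ⟨smul_le_withDensity_of_ae_le (hbd.mono fun _ h => h.1),
      withDensity_le_smul_of_ae_le (hbd.mono fun _ h => h.2)⟩

/-- density condition. For `1 ≤ k < n` there is a constant `λ_{nk} > 1` such that
whenever a consistent family of probability measures `μ_α` has densities `ρ_α` with respect to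
the products `ν_α = ∏_{i ∈ α} ν_i` satisfying `m ≤ ρ_α ≤ M` a.e. with `M/m ≤ λ_{nk}`,
a uniting probability measure exists. -/
theorem statement3 (n k : ℕ) (hk : 1 ≤ k) (hkn : k < n) :
    ∃ lam : ℝ, 1 < lam ∧
      ∀ (X : Fin n → Type) [inst : ∀ i, MeasurableSpace (X i)]
        (μ : (α : Finset (Fin n)) → Measure ((i : α) → X i))
        (ν : ∀ i, Measure (X i)),
        (∀ i, IsProbabilityMeasure (ν i)) →
        (∀ α : Finset (Fin n), α.card = k → IsProbabilityMeasure (μ α)) →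
        (∀ (α β : Finset (Fin n)), α.card = k → β.card = k →
          Measure.map (fun (x : (i : α) → X i) (i : (α ∩ β : Finset (Fin n))) =>
              x ⟨i.1, Finset.mem_of_mem_inter_left i.2⟩) (μ α) =
          Measure.map (fun (x : (i : β) → X i) (i : (α ∩ β : Finset (Fin n))) =>
              x ⟨i.1, Finset.mem_of_mem_inter_right i.2⟩) (μ β)) →
        ∀ m M : ℝ, 0 < m → m ≤ M → M / m ≤ lam →
        (∀ α : Finset (Fin n), α.card = k →
          ∃ ρ : ((i : α) → X i) → ℝ≥0∞,
            μ α = (Measure.pi fun i : α => ν i).withDensity ρ ∧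
            ∀ᵐ x ∂(Measure.pi fun i : α => ν i),
              ENNReal.ofReal m ≤ ρ x ∧ ρ x ≤ ENNReal.ofReal M) →
        ∃ π : Measure (∀ i, X i), IsProbabilityMeasure π ∧
          ∀ α : Finset (Fin n), α.card = k →
            Measure.map (fun (x : ∀ i, X i) (i : α) => x i) π = μ α :=
  statement3_general n k hkn
end

section
/- Let {μ_12, μ_13, μ_23} be a consistent family of probability measures on X_1×X_2, X_1×X_3, X_2×X_3 with one-dimensional marginals μ_1, μ_2, μ_3, and suppose μ_ij ≥ (2/3)·μ_i ⊗ μ_j for all {i,j}. Then the measure μ on X_1×X_2×X_3 given by μ = (μ_12 − (2/3)μ_1⊗μ_2) ⊗ μ_3 + (μ_13 − (2/3)μ_1⊗μ_3) ⊗ μ_2 + (μ_23 − (2/3)μ_2⊗μ_3) ⊗ μ_1 (with the factors placed in the appropriate coordinates) is a nonnegative uniting measure; in particular Π(μ_ij) is nonempty. -/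
/-!
Write `νᵢⱼ = μᵢⱼ - (2/3) μᵢ ⊗ μⱼ`. Since both `μᵢⱼ` and `μᵢ ⊗ μⱼ` have marginals `μᵢ` and `μⱼ`,
each `νᵢⱼ` has marginals `(1/3) μᵢ` and `(1/3) μⱼ`. Projecting the glued measure onto `Xᵢ × Xⱼ`,
the term built from `νᵢⱼ` returns `νᵢⱼ`, while each of the other two terms returns
`(1/3) μᵢ ⊗ μⱼ`; the sum is `νᵢⱼ + (2/3) μᵢ ⊗ μⱼ = μᵢⱼ`.
-/

open MeasureTheory
open scoped ENNReal

theorem ENNReal.one_sub_two_div_three_add_self : (1 - 2 / 3 : ℝ≥0∞) + (1 - 2 / 3) = 2 / 3 := by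
  have h : (3⁻¹ + 3⁻¹ : ℝ≥0∞) = 2 / 3 := by rw [ENNReal.div_eq_inv_mul, mul_two]
  have h' : (1 - 2 / 3 : ℝ≥0∞) = 3⁻¹ := by
    refine ENNReal.sub_eq_of_eq_add (ENNReal.div_ne_top (by norm_num) (by norm_num)) ?_
    rw [← h, ← add_assoc, ENNReal.inv_three_add_inv_three]
  rw [h', h]

namespace MeasureTheory.Measure

variable {α β γ : Type*} [MeasurableSpace α] [MeasurableSpace β] [MeasurableSpace γ]

theorem map_sub_smul_of_map_eq {μ π : Measure α} {ρ : Measure β} [IsFiniteMeasure μ]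
    {f : α → β} (hf : Measurable f) {c : ℝ≥0∞} (h : c • π ≤ μ)
    (hμ : μ.map f = ρ) (hπ : π.map f = ρ) :
    (μ - c • π).map f = (1 - c) • ρ := by
  have : IsFiniteMeasure (c • π) := isFiniteMeasure_of_le μ h
  have : IsFiniteMeasure ρ := hμ ▸ inferInstance
  ext s hs
  rw [map_apply hf hs, sub_apply (hf hs) h, smul_apply, ← map_apply hf hs, ← map_apply hf hs,
    hμ, hπ, smul_apply, smul_eq_mul, smul_eq_mul, ENNReal.sub_mul fun _ _ ↦ measure_ne_top ρ s,
    one_mul]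

theorem map_fst_sub_smul_prod {μ : Measure (α × β)} [IsFiniteMeasure μ] {ρ : Measure α}
    {σ : Measure β} [SFinite ρ] [IsProbabilityMeasure σ] {c : ℝ≥0∞} (h : c • ρ.prod σ ≤ μ)
    (hμ : μ.map Prod.fst = ρ) : (μ - c • ρ.prod σ).map Prod.fst = (1 - c) • ρ :=
  map_sub_smul_of_map_eq measurable_fst h hμ (by simp)

theorem map_snd_sub_smul_prod {μ : Measure (α × β)} [IsFiniteMeasure μ] {ρ : Measure α}
    {σ : Measure β} [IsProbabilityMeasure ρ] [SFinite σ] {c : ℝ≥0∞} (h : c • ρ.prod σ ≤ μ)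
    (hμ : μ.map Prod.snd = σ) : (μ - c • ρ.prod σ).map Prod.snd = (1 - c) • σ :=
  map_sub_smul_of_map_eq measurable_snd h hμ (by simp)

theorem sub_smul_add_smul_add_smul {μ π : Measure α} [IsFiniteMeasure μ] {a b c : ℝ≥0∞}
    (h : c • π ≤ μ) (habc : a + b = c) : μ - c • π + a • π + b • π = μ := by
  have : IsFiniteMeasure (c • π) := isFiniteMeasure_of_le μ h
  rw [add_assoc, ← add_smul, habc, sub_add_cancel_of_le h]

theorem map_prodMap_id_prod (ν : Measure α) (ρ : Measure β) [SFinite ν] [SFinite ρ]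
    {f : α → γ} (hf : Measurable f) : (ν.prod ρ).map (Prod.map f id) = (ν.map f).prod ρ := by
  rw [← map_prod_map ν ρ hf measurable_id, map_id]

theorem map_swap_prodMap_id_prod (ν : Measure α) (ρ : Measure β) [SFinite ν] [SFinite ρ]
    {f : α → γ} (hf : Measurable f) : (ν.prod ρ).map (fun p ↦ (p.2, f p.1)) = ρ.prod (ν.map f) := by
  rw [show (fun p : α × β ↦ (p.2, f p.1)) = Prod.swap ∘ Prod.map f id from rfl,
    ← map_map measurable_swap (hf.prodMap measurable_id), map_prodMap_id_prod ν ρ hf, prod_swap]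

end MeasureTheory.Measure

open Measure

section Gluing

variable {α β γ : Type*} [MeasurableSpace α] [MeasurableSpace β] [MeasurableSpace γ]

noncomputable def glueProd (ν₁₂ : Measure (α × β)) (ν₁₃ : Measure (α × γ))
    (ν₂₃ : Measure (β × γ)) (ρ₁ : Measure α) (ρ₂ : Measure β) (ρ₃ : Measure γ) :
    Measure (α × β × γ) :=
  (ν₁₂.prod ρ₃).map (fun p ↦ (p.1.1, p.1.2, p.2))
    + (ν₁₃.prod ρ₂).map (fun p ↦ (p.1.1, p.2, p.1.2))
    + (ν₂₃.prod ρ₁).map (fun p ↦ (p.2, p.1.1, p.1.2))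

variable {ν₁₂ : Measure (α × β)} {ν₁₃ : Measure (α × γ)} {ν₂₃ : Measure (β × γ)}
  {ρ₁ : Measure α} {ρ₂ : Measure β} {ρ₃ : Measure γ}

theorem map_proj12_glueProd [SFinite ν₁₃] [SFinite ν₂₃] [SFinite ρ₁] [SFinite ρ₂]
    [IsProbabilityMeasure ρ₃] :
    (glueProd ν₁₂ ν₁₃ ν₂₃ ρ₁ ρ₂ ρ₃).map (fun x ↦ (x.1, x.2.1)) =
      ν₁₂ + (ν₁₃.map Prod.fst).prod ρ₂ + ρ₁.prod (ν₂₃.map Prod.fst) := by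
  have hq : Measurable (fun x : α × β × γ ↦ (x.1, x.2.1)) := by fun_prop
  rw [glueProd, Measure.map_add _ _ hq, Measure.map_add _ _ hq, map_map hq (by fun_prop),
    map_map hq (by fun_prop), map_map hq (by fun_prop)]
  simp only [Function.comp_def]
  rw [map_fst_prod, measure_univ, one_smul, ← map_prodMap_id_prod _ _ measurable_fst,
    ← map_swap_prodMap_id_prod _ _ measurable_fst]
  rfl

theorem map_proj13_glueProd [SFinite ν₁₂] [SFinite ν₂₃] [SFinite ρ₁] [IsProbabilityMeasure ρ₂]
    [SFinite ρ₃] :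
    (glueProd ν₁₂ ν₁₃ ν₂₃ ρ₁ ρ₂ ρ₃).map (fun x ↦ (x.1, x.2.2)) =
      (ν₁₂.map Prod.fst).prod ρ₃ + ν₁₃ + ρ₁.prod (ν₂₃.map Prod.snd) := by
  have hq : Measurable (fun x : α × β × γ ↦ (x.1, x.2.2)) := by fun_prop
  rw [glueProd, Measure.map_add _ _ hq, Measure.map_add _ _ hq, map_map hq (by fun_prop),
    map_map hq (by fun_prop), map_map hq (by fun_prop)]
  simp only [Function.comp_def]
  rw [map_fst_prod, measure_univ, one_smul, ← map_prodMap_id_prod _ _ measurable_fst,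
    ← map_swap_prodMap_id_prod _ _ measurable_snd]
  rfl

theorem map_snd_glueProd [SFinite ν₁₂] [SFinite ν₁₃] [IsProbabilityMeasure ρ₁] [SFinite ρ₂]
    [SFinite ρ₃] :
    (glueProd ν₁₂ ν₁₃ ν₂₃ ρ₁ ρ₂ ρ₃).map (fun x ↦ x.2) =
      (ν₁₂.map Prod.snd).prod ρ₃ + ρ₂.prod (ν₁₃.map Prod.snd) + ν₂₃ := by
  have hq : Measurable (fun x : α × β × γ ↦ x.2) := by fun_prop
  rw [glueProd, Measure.map_add _ _ hq, Measure.map_add _ _ hq, map_map hq (by fun_prop),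
    map_map hq (by fun_prop), map_map hq (by fun_prop)]
  simp only [Function.comp_def]
  rw [map_fst_prod, measure_univ, one_smul, ← map_prodMap_id_prod _ _ measurable_snd,
    ← map_swap_prodMap_id_prod _ _ measurable_snd]
  rfl

end Gluing

/-- if a consistent family `{μ_12, μ_13, μ_23}` with one-dimensional marginals
`μ_1, μ_2, μ_3` satisfies `μ_ij ≥ (2/3)·μ_i ⊗ μ_j`, then the explicit measure
`μ = (μ_12 − (2/3)μ_1⊗μ_2) ⊗ μ_3 + (μ_13 − (2/3)μ_1⊗μ_3) ⊗ μ_2 + (μ_23 − (2/3)μ_2⊗μ_3) ⊗ μ_1`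
(with factors placed into the appropriate coordinates) is a (nonnegative) uniting probability
measure; in particular `Π(μ_ij)` is nonempty. -/
theorem statement7
    {X1 X2 X3 : Type*} [MeasurableSpace X1] [MeasurableSpace X2] [MeasurableSpace X3]
    (μ1 : Measure X1) (μ2 : Measure X2) (μ3 : Measure X3)
    (μ12 : Measure (X1 × X2)) (μ13 : Measure (X1 × X3)) (μ23 : Measure (X2 × X3))
    [IsProbabilityMeasure μ12] [IsProbabilityMeasure μ13] [IsProbabilityMeasure μ23]
    (h121 : Measure.map Prod.fst μ12 = μ1) (h131 : Measure.map Prod.fst μ13 = μ1)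
    (h122 : Measure.map Prod.snd μ12 = μ2) (h232 : Measure.map Prod.fst μ23 = μ2)
    (h133 : Measure.map Prod.snd μ13 = μ3) (h233 : Measure.map Prod.snd μ23 = μ3)
    (hge12 : (2 / 3 : ℝ≥0∞) • μ1.prod μ2 ≤ μ12)
    (hge13 : (2 / 3 : ℝ≥0∞) • μ1.prod μ3 ≤ μ13)
    (hge23 : (2 / 3 : ℝ≥0∞) • μ2.prod μ3 ≤ μ23) :
    ∃ μ : Measure (X1 × X2 × X3),
      μ = Measure.map (fun p : (X1 × X2) × X3 => (p.1.1, p.1.2, p.2))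
            ((μ12 - (2 / 3 : ℝ≥0∞) • μ1.prod μ2).prod μ3)
        + Measure.map (fun p : (X1 × X3) × X2 => (p.1.1, p.2, p.1.2))
            ((μ13 - (2 / 3 : ℝ≥0∞) • μ1.prod μ3).prod μ2)
        + Measure.map (fun p : (X2 × X3) × X1 => (p.2, p.1.1, p.1.2))
            ((μ23 - (2 / 3 : ℝ≥0∞) • μ2.prod μ3).prod μ1) ∧
      IsProbabilityMeasure μ ∧
      Measure.map (fun x : X1 × X2 × X3 => (x.1, x.2.1)) μ = μ12 ∧
      Measure.map (fun x : X1 × X2 × X3 => (x.1, x.2.2)) μ = μ13 ∧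
      Measure.map (fun x : X1 × X2 × X3 => x.2) μ = μ23 := by
  have : IsProbabilityMeasure μ1 := h121 ▸ isProbabilityMeasure_map measurable_fst.aemeasurable
  have : IsProbabilityMeasure μ2 := h122 ▸ isProbabilityMeasure_map measurable_snd.aemeasurable
  have : IsProbabilityMeasure μ3 := h133 ▸ isProbabilityMeasure_map measurable_snd.aemeasurable
  set G := glueProd (μ12 - (2 / 3 : ℝ≥0∞) • μ1.prod μ2) (μ13 - (2 / 3 : ℝ≥0∞) • μ1.prod μ3)
    (μ23 - (2 / 3 : ℝ≥0∞) • μ2.prod μ3) μ1 μ2 μ3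
  have hthirds := ENNReal.one_sub_two_div_three_add_self
  have h12 : G.map (fun x ↦ (x.1, x.2.1)) = μ12 := by
    rw [map_proj12_glueProd, map_fst_sub_smul_prod hge13 h131, map_fst_sub_smul_prod hge23 h232,
      prod_smul_left, prod_smul_right]
    exact sub_smul_add_smul_add_smul hge12 hthirds
  have h13 : G.map (fun x ↦ (x.1, x.2.2)) = μ13 := by
    rw [map_proj13_glueProd, map_fst_sub_smul_prod hge12 h121, map_snd_sub_smul_prod hge23 h233,
      prod_smul_left, prod_smul_right, add_comm (_ • _)]
    exact sub_smul_add_smul_add_smul hge13 hthirds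
  have h23 : G.map (fun x ↦ x.2) = μ23 := by
    rw [map_snd_glueProd, map_snd_sub_smul_prod hge12 h122, map_snd_sub_smul_prod hge13 h133,
      prod_smul_left, prod_smul_right, add_comm, ← add_assoc]
    exact sub_smul_add_smul_add_smul hge23 hthirds
  have : IsProbabilityMeasure (G.map fun x ↦ (x.1, x.2.1)) := h12 ▸ inferInstance
  exact ⟨G, rfl, isProbabilityMeasure_of_map fun x : X1 × X2 × X3 ↦ (x.1, x.2.1), h12, h13, h23⟩
end

section
/- Let X_1, ..., X_n be Polish spaces with Borel probability measures μ_1, ..., μ_n, let μ = ∏_{i=1}^n μ_i, and let c ∈ L¹(∏_{i=1}^n X_i, μ). Then there exists a point y ∈ ∏_{i=1}^n X_i such that for every subset α ⊆ {1, ..., n} the section c_α : x_α ↦ c(x_α y_{complement of α}) (the function obtained by fixing the coordinates outside α to those of y) is integrable with respect to μ_α = ∏_{i∈α} μ_i and satisfies ‖c_α‖_{L¹(μ_α)} ≤ 2^{n+1} ‖c‖_{L¹(μ)}. For α the empty set, c_∅ is the constant c(y) and the conclusion reads |c(y)| ≤ 2^{n+1}‖c‖_{L¹(μ)}. -/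
open MeasureTheory
open scoped ENNReal

/-!
If `y` is `μ`-distributed and `x_α` is an independent `μ_α`-distributed point, the patched point
`x_α y_{αᶜ}` is again `μ`-distributed, so by Tonelli the expected `L¹(μ_α)`-norm of the section
`c_α` is `‖c‖₁`. Summing over the `2ⁿ` subsets `α`, the first moment method gives one `y` with
`∑_α ‖c_α‖₁ ≤ 2ⁿ ‖c‖₁`, chosen outside the null set where some section fails to be integrable.
-/

/-- `α.patch xα y` is the point `x_α y_{αᶜ}`. -/
def Finset.patch {ι : Type*} [DecidableEq ι] {X : ι → Type*} (α : Finset ι)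
    (xα : ∀ i : α, X i) (y : ∀ i, X i) : ∀ i, X i :=
  fun i => if h : i ∈ α then xα ⟨i, h⟩ else y i

namespace MeasureTheory

variable {ι : Type*} [Fintype ι] [DecidableEq ι] {X : ι → Type*} [∀ i, MeasurableSpace (X i)]
  (μ : ∀ i, Measure (X i)) [∀ i, IsProbabilityMeasure (μ i)]

theorem measurePreserving_patch (α : Finset ι) :
    MeasurePreserving (fun p : (∀ i, X i) × (∀ i : α, X i) => α.patch p.2 p.1)
      ((Measure.pi μ).prod (Measure.pi fun i : α => μ i)) (Measure.pi μ) := by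
  set e := MeasurableEquiv.piEquivPiSubtypeProd X (· ∈ α)
  have he : MeasurePreserving e (Measure.pi μ)
      ((Measure.pi fun i : α => μ i).prod (Measure.pi fun i : {i // i ∉ α} => μ i)) := by
    convert measurePreserving_piEquivPiSubtypeProd μ (· ∈ α)
  -- discarding the coordinates in `α` preserves measure because the `μ i` are probabilities
  have hrestrict : MeasurePreserving (fun y => (e y).2) (Measure.pi μ)
      (Measure.pi fun i : {i // i ∉ α} => μ i) :=
    measurePreserving_snd.comp he
  exact (he.symm e).comp (Measure.measurePreserving_swap.comp (hrestrict.prod (.id _)))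

theorem ae_integrable_patch {E : Type*} [NormedAddCommGroup E] {c : (∀ i, X i) → E}
    (hc : Integrable c (Measure.pi μ)) (α : Finset ι) :
    ∀ᵐ y ∂(Measure.pi μ), Integrable (fun xα => c (α.patch xα y)) (Measure.pi fun i : α => μ i) :=
  ((measurePreserving_patch μ α).integrable_comp_of_integrable hc).prod_right_ae

theorem aemeasurable_lintegral_patch {f : (∀ i, X i) → ℝ≥0∞}
    (hf : AEMeasurable f (Measure.pi μ)) (α : Finset ι) :
    AEMeasurable (fun y => ∫⁻ xα, f (α.patch xα y) ∂(Measure.pi fun i : α => μ i))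
      (Measure.pi μ) :=
  (hf.comp_quasiMeasurePreserving
    (measurePreserving_patch μ α).quasiMeasurePreserving).lintegral_prod_right'

theorem lintegral_lintegral_patch {f : (∀ i, X i) → ℝ≥0∞}
    (hf : AEMeasurable f (Measure.pi μ)) (α : Finset ι) :
    ∫⁻ y, ∫⁻ xα, f (α.patch xα y) ∂(Measure.pi fun i : α => μ i) ∂(Measure.pi μ) =
      ∫⁻ x, f x ∂(Measure.pi μ) := by
  have hpatch := measurePreserving_patch μ α
  calc ∫⁻ y, ∫⁻ xα, f (α.patch xα y) ∂(Measure.pi fun i : α => μ i) ∂(Measure.pi μ)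
      = ∫⁻ p, f (α.patch p.2 p.1) ∂((Measure.pi μ).prod (Measure.pi fun i : α => μ i)) :=
        (lintegral_prod _ (hf.comp_quasiMeasurePreserving hpatch.quasiMeasurePreserving)).symm
    _ = ∫⁻ x, f x ∂(Measure.pi μ) := by
        rw [← lintegral_map' (by rwa [hpatch.map_eq]) hpatch.measurable.aemeasurable,
          hpatch.map_eq]

theorem exists_forall_integrable_patch_and_integral_norm_patch_le {E : Type*}
    [NormedAddCommGroup E] {c : (∀ i, X i) → E} (hc : Integrable c (Measure.pi μ)) :
    ∃ y, ∀ α : Finset ι,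
      Integrable (fun xα => c (α.patch xα y)) (Measure.pi fun i : α => μ i) ∧
      ∫ xα, ‖c (α.patch xα y)‖ ∂(Measure.pi fun i : α => μ i) ≤
        2 ^ Fintype.card ι * ∫ x, ‖c x‖ ∂(Measure.pi μ) := by
  set F := fun y => ∑ α : Finset ι, ∫⁻ xα, ‖c (α.patch xα y)‖ₑ ∂(Measure.pi fun i : α => μ i)
  have hc_enorm : AEMeasurable (fun x => ‖c x‖ₑ) (Measure.pi μ) := hc.1.enorm
  have hF_meas : AEMeasurable F (Measure.pi μ) :=
    Finset.aemeasurable_fun_sum _ fun α _ => aemeasurable_lintegral_patch μ hc_enorm α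
  have hF_int :
      ∫⁻ y, F y ∂(Measure.pi μ) = 2 ^ Fintype.card ι * ∫⁻ x, ‖c x‖ₑ ∂(Measure.pi μ) := by
    rw [lintegral_finsetSum' _ fun α _ => aemeasurable_lintegral_patch μ hc_enorm α]
    simp only [lintegral_lintegral_patch μ hc_enorm, Finset.sum_const, Finset.card_univ,
      Fintype.card_finset, nsmul_eq_mul, Nat.cast_pow, Nat.cast_ofNat]
  obtain ⟨y, hy_int, hy_le⟩ :=
    exists_notMem_null_le_lintegral hF_meas (ae_all_iff.2 (ae_integrable_patch μ hc))
  refine ⟨y, fun α => ⟨not_not.1 hy_int α, ?_⟩⟩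
  rw [← ENNReal.ofReal_le_ofReal_iff (by positivity), ENNReal.ofReal_mul (by positivity),
    ENNReal.ofReal_pow zero_le_two, ENNReal.ofReal_ofNat,
    ofReal_integral_norm_eq_lintegral_enorm (not_not.1 hy_int α),
    ofReal_integral_norm_eq_lintegral_enorm hc, ← hF_int]
  exact (Finset.single_le_sum (fun _ _ => zero_le) (Finset.mem_univ α)).trans hy_le

end MeasureTheory

theorem statement10_general (n : ℕ) (X : Fin n → Type)
    [∀ i, MeasurableSpace (X i)]
    (μ : ∀ i, Measure (X i)) [∀ i, IsProbabilityMeasure (μ i)]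
    (c : (∀ i, X i) → ℝ) (hc : Integrable c (Measure.pi μ)) :
    ∃ y : ∀ i, X i, ∀ α : Finset (Fin n),
      Integrable (fun xα : (i : α) → X i =>
          c (fun i => if h : i ∈ α then xα ⟨i, h⟩ else y i))
        (Measure.pi fun i : α => μ i) ∧
      ∫ xα, |c (fun i => if h : i ∈ α then xα ⟨i, h⟩ else y i)|
          ∂(Measure.pi fun i : α => μ i) ≤
        2 ^ (n + 1) * ∫ x, |c x| ∂(Measure.pi μ) := by
  obtain ⟨y, hy⟩ := exists_forall_integrable_patch_and_integral_norm_patch_le μ hc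
  rw [Fintype.card_fin] at hy
  have h2pow : (2 : ℝ) ^ n ≤ 2 ^ (n + 1) := pow_le_pow_right₀ one_le_two n.le_succ
  exact ⟨y, fun α => ⟨(hy α).1, (hy α).2.trans
    (mul_le_mul_of_nonneg_right h2pow (integral_nonneg fun x => norm_nonneg (c x)))⟩⟩

/-- for an integrable function `c` on a product of Polish probability spaces,
there is a point `y` such that for every subset `α` of coordinates the section of `c`
obtained by fixing the coordinates outside `α` to those of `y` is integrable with
`L¹`-norm at most `2^{n+1} ‖c‖₁`. -/
theorem statement10 (n : ℕ) (X : Fin n → Type)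
    [∀ i, TopologicalSpace (X i)] [∀ i, PolishSpace (X i)]
    [∀ i, MeasurableSpace (X i)] [∀ i, BorelSpace (X i)]
    (μ : ∀ i, Measure (X i)) [∀ i, IsProbabilityMeasure (μ i)]
    (c : (∀ i, X i) → ℝ) (hc : Integrable c (Measure.pi μ)) :
    ∃ y : ∀ i, X i, ∀ α : Finset (Fin n),
      Integrable (fun xα : (i : α) → X i =>
          c (fun i => if h : i ∈ α then xα ⟨i, h⟩ else y i))
        (Measure.pi fun i : α => μ i) ∧
      ∫ xα, |c (fun i => if h : i ∈ α then xα ⟨i, h⟩ else y i)|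
          ∂(Measure.pi fun i : α => μ i) ≤
        2 ^ (n + 1) * ∫ x, |c x| ∂(Measure.pi μ) :=
  statement10_general n X μ c hc
end

section
/- For all natural numbers 1 ≤ k < n there exists a constant C, depending only on n and k, with the following property. Let X_1, ..., X_n be Polish spaces with Borel probability measures μ_1, ..., μ_n and let μ = ∏_{i=1}^n μ_i. For every finite (n,k)-function F ∈ L¹(∏_{i=1}^n X_i, μ) there exists a family of functions f̂_α ∈ L¹(X_α, μ_α), indexed by subsets α of size k, where μ_α = ∏_{i∈α} μ_i, such that F(x) = Σ_α f̂_α(x_α) for all x and ‖f̂_α‖_{L¹(μ_α)} ≤ C · ‖F‖_{L¹(μ)} for all α. -/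
/-!
Fix an anchor point `a`. Möbius inversion on the Boolean lattice of coordinate sets writes
`F = ∑_β F_β` with `F_β x = ∑_{γ ⊆ β} (-1)^|β \ γ| F(x_γ, a_{γᶜ})`, and `F_β` depends only on
`x_β`. For an `(n,k)`-function, `F_β = 0` as soon as `|β| > k`: every summand `f_α` ignores some
coordinate of `β`, and the alternating sum cancels in that coordinate. Assigning each remaining
`β` to a `k`-set `α ⊇ β` gives the new family. Each `F_β` is a signed sum of the sections
`u ↦ F(u, a_{γᶜ})`; by Fubini and Markov's inequality, a random anchor makes all `2^n` of them
integrable with `L¹` norm at most `2 · 2^n · ‖F‖₁` with probability at least `1/2`.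
-/

open MeasureTheory Finset Function

section Moebius

variable {ι κ R : Type*} [DecidableEq ι] [CommRing R]

def moebiusTransform (φ : Finset ι → R) (β : Finset ι) : R :=
  ∑ γ ∈ β.powerset, (-1) ^ #(β \ γ) * φ γ

lemma moebiusTransform_insert {φ : Finset ι → R} {β : Finset ι} {i : ι} (hi : i ∉ β) :
    moebiusTransform φ (insert i β) =
      moebiusTransform (fun γ ↦ φ (insert i γ)) β - moebiusTransform φ β := by
  unfold moebiusTransform
  rw [sum_powerset_insert hi, sub_eq_add_neg, add_comm, ← sum_neg_distrib]
  congr 1 <;> refine sum_congr rfl fun γ hγ ↦ ?_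
  · rw [insert_sdiff_insert, sdiff_insert_of_notMem hi]
  · have hiγ : i ∉ β \ γ := fun h ↦ hi (mem_sdiff.mp h).1
    rw [insert_sdiff_of_notMem _ (fun h ↦ hi (mem_powerset.mp hγ h)), card_insert_of_notMem hiγ,
      pow_succ]
    ring

lemma sum_powerset_moebiusTransform (φ : Finset ι → R) (s : Finset ι) :
    ∑ β ∈ s.powerset, moebiusTransform φ β = φ s := by
  induction s using Finset.induction_on generalizing φ with
  | empty => simp [moebiusTransform]
  | @insert i s hi ih =>
    rw [sum_powerset_insert hi, ← ih fun γ ↦ φ (insert i γ), ← sum_add_distrib]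
    refine sum_congr rfl fun β hβ ↦ ?_
    rw [moebiusTransform_insert fun h ↦ hi (mem_powerset.mp hβ h)]
    ring

lemma moebiusTransform_eq_zero {φ : Finset ι → R} {β : Finset ι} {i : ι} (hi : i ∈ β)
    (hφ : ∀ γ, φ (insert i γ) = φ γ) : moebiusTransform φ β = 0 := by
  rw [← insert_erase hi, moebiusTransform_insert (notMem_erase i β), funext hφ, sub_self]

lemma moebiusTransform_sum (A : Finset κ) (φ : κ → Finset ι → R) (β : Finset ι) :
    moebiusTransform (fun γ ↦ ∑ α ∈ A, φ α γ) β = ∑ α ∈ A, moebiusTransform (φ α) β := by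
  simp only [moebiusTransform, mul_sum]
  exact sum_comm

end Moebius

section Anchored

variable {ι κ R : Type*} [DecidableEq ι] [CommRing R] {X : ι → Type*}

def anchoredComponent (a : ∀ i, X i) (F : (∀ i, X i) → R) (β : Finset ι) (x : ∀ i, X i) : R :=
  moebiusTransform (fun γ ↦ F (γ.piecewise x a)) β

lemma sum_anchoredComponent [Fintype ι] (a : ∀ i, X i) (F : (∀ i, X i) → R) (x : ∀ i, X i) :
    ∑ β : Finset ι, anchoredComponent a F β x = F x := by
  rw [← powerset_univ]
  exact (sum_powerset_moebiusTransform _ univ).trans (congrArg F (piecewise_univ x a))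

lemma dependsOn_anchoredComponent (a : ∀ i, X i) (F : (∀ i, X i) → R) (β : Finset ι) :
    DependsOn (anchoredComponent a F β) β := fun _ _ hxy ↦
  sum_congr rfl fun γ hγ ↦ congrArg _ <| congrArg F <|
    piecewise_congr (s := γ) (fun i hi ↦ hxy i (mem_powerset.mp hγ hi)) fun _ _ ↦ rfl

lemma anchoredComponent_eq_zero {a : ∀ i, X i} {F : (∀ i, X i) → R} {s : Set ι}
    (hF : DependsOn F s) {β : Finset ι} {i : ι} (hiβ : i ∈ β) (his : i ∉ s) (x : ∀ i, X i) :
    anchoredComponent a F β x = 0 :=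
  moebiusTransform_eq_zero hiβ fun _ ↦ hF fun j hj ↦
    piecewise_insert_of_ne _ _ _ fun (hji : j = i) ↦ his (hji ▸ hj)

lemma anchoredComponent_sum (a : ∀ i, X i) (A : Finset κ) (F : κ → (∀ i, X i) → R)
    (β : Finset ι) (x : ∀ i, X i) :
    anchoredComponent a (fun x ↦ ∑ α ∈ A, F α x) β x = ∑ α ∈ A, anchoredComponent a (F α) β x :=
  moebiusTransform_sum A _ β

lemma anchoredComponent_eq_zero_of_forall_not_subset {a : ∀ i, X i} {F : (∀ i, X i) → R}
    {A : Finset (Finset ι)} {f : (α : Finset ι) → (∀ i : α, X i) → R}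
    (hf : ∀ x, F x = ∑ α ∈ A, f α (fun i ↦ x i)) {β : Finset ι} (hβ : ∀ α ∈ A, ¬ β ⊆ α)
    (x : ∀ i, X i) : anchoredComponent a F β x = 0 := by
  rw [funext hf, anchoredComponent_sum]
  refine sum_eq_zero fun α hα ↦ ?_
  obtain ⟨i, hiβ, hiα⟩ := not_subset.mp (hβ α hα)
  exact anchoredComponent_eq_zero (fun _ _ h ↦ congrArg (f α) (α.dependsOn_restrict h)) hiβ
    (by simpa using hiα) x

end Anchored

section IntegralBounds

variable {Ω κ : Type*} [MeasurableSpace Ω] {ν : Measure Ω}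

lemma measureReal_mul_integral_lt_le [IsFiniteMeasure ν] {f : Ω → ℝ} (hf₀ : 0 ≤ᵐ[ν] f)
    (hf : Integrable f ν) {t : ℝ} (ht : 0 < t) :
    ν.real {ω | t * ∫ ω, f ω ∂ν < f ω} ≤ t⁻¹ := by
  rcases (integral_nonneg_of_ae hf₀).eq_or_lt with h₀ | hpos
  · have hf_ae : f =ᵐ[ν] 0 := (integral_eq_zero_iff_of_nonneg_ae hf₀ hf).mp h₀.symm
    have hnull : ν {ω | t * ∫ ω, f ω ∂ν < f ω} = 0 :=
      measure_mono_null (Set.ofPred_subset_ofPred.mpr fun ω hω (h : f ω = 0) ↦ by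
        rw [h, ← h₀, mul_zero] at hω
        exact lt_irrefl _ hω) (ae_iff.mp hf_ae)
    rw [measureReal_def, hnull, ENNReal.toReal_zero]
    positivity
  · have hmarkov := mul_meas_ge_le_integral_of_nonneg hf₀ hf (t * ∫ ω, f ω ∂ν)
    calc ν.real {ω | t * ∫ ω, f ω ∂ν < f ω}
        ≤ ν.real {ω | t * ∫ ω, f ω ∂ν ≤ f ω} :=
          measureReal_mono (Set.ofPred_subset_ofPred.mpr fun _ ↦ le_of_lt)
      _ ≤ t⁻¹ := by
        rw [← one_div, le_div_iff₀' ht]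
        nlinarith

lemma measureReal_not_integrable_section_le {α β : Type*} [MeasurableSpace α]
    [MeasurableSpace β] {μ : Measure α} {ν : Measure β} [SFinite μ] [IsFiniteMeasure ν]
    {H : α × β → ℝ} (hH : Integrable H (μ.prod ν)) {t : ℝ} (ht : 0 < t) :
    ν.real {v | ¬ (Integrable (fun u ↦ H (u, v)) μ ∧
      ∫ u, |H (u, v)| ∂μ ≤ t * ∫ z, |H z| ∂(μ.prod ν))} ≤ t⁻¹ := by
  have hψ : Integrable (fun v ↦ ∫ u, |H (u, v)| ∂μ) ν := by
    simpa only [Real.norm_eq_abs] using hH.integral_norm_prod_right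
  have hnull : ν {v | ¬ Integrable (fun u ↦ H (u, v)) μ} = 0 := ae_iff.mp hH.prod_left_ae
  rw [integral_prod_symm _ hH.abs]
  calc _ ≤ ν.real ({v | ¬ Integrable (fun u ↦ H (u, v)) μ} ∪
          {v | t * ∫ v, ∫ u, |H (u, v)| ∂μ ∂ν < ∫ u, |H (u, v)| ∂μ}) :=
        measureReal_mono fun v hv ↦ by
          simp only [Set.mem_ofPred_eq, Set.mem_union, not_and_or, not_le] at hv ⊢
          exact hv
    _ ≤ ν.real {v | ¬ Integrable (fun u ↦ H (u, v)) μ} +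
          ν.real {v | t * ∫ v, ∫ u, |H (u, v)| ∂μ ∂ν < ∫ u, |H (u, v)| ∂μ} :=
        measureReal_union_le _ _
    _ ≤ t⁻¹ := by
      rw [measureReal_def, hnull, ENNReal.toReal_zero, zero_add]
      exact measureReal_mul_integral_lt_le
        (ae_of_all _ fun v ↦ integral_nonneg fun u ↦ abs_nonneg _) hψ ht

lemma exists_forall_of_sum_measureReal_lt_one [IsProbabilityMeasure ν] [Fintype κ]
    {P : κ → Ω → Prop} (h : ∑ i, ν.real {ω | ¬ P i ω} < 1) : ∃ ω, ∀ i, P i ω := by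
  by_contra! hP
  have hcover : (Set.univ : Set Ω) = ⋃ i, {ω | ¬ P i ω} := by
    ext ω
    simpa using hP ω
  have := measureReal_iUnion_fintype_le (μ := ν) fun i ↦ {ω | ¬ P i ω}
  rw [← hcover, probReal_univ] at this
  linarith

lemma integral_abs_finset_sum_le {s : Finset κ} {f : κ → Ω → ℝ} (hf : ∀ i ∈ s, Integrable (f i) ν) :
    ∫ ω, |∑ i ∈ s, f i ω| ∂ν ≤ ∑ i ∈ s, ∫ ω, |f i ω| ∂ν := by
  rw [← integral_finsetSum _ fun i hi ↦ (hf i hi).abs]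
  exact integral_mono (integrable_finsetSum _ hf).abs
    (integrable_finsetSum _ fun i hi ↦ (hf i hi).abs) fun ω ↦ abs_sum_le_sum_abs _ _

end IntegralBounds

lemma measurePreserving_restrict₂ {ι : Type*} {X : ι → Type*} [∀ i, MeasurableSpace (X i)]
    (μ : ∀ i, Measure (X i)) [∀ i, IsProbabilityMeasure (μ i)] {γ α : Finset ι} (h : γ ⊆ α) :
    MeasurePreserving (restrict₂ h) (Measure.pi fun i : α ↦ μ i) (Measure.pi fun i : γ ↦ μ i) :=
  ⟨measurable_restrict₂ h, (isProjectiveMeasureFamily_pi μ α γ h).symm⟩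

section Anchor

variable {ι : Type*} [DecidableEq ι] {X : ι → Type*} [∀ i, MeasurableSpace (X i)]
  (μ : ∀ i, Measure (X i)) [∀ i, IsProbabilityMeasure (μ i)]

def IsGoodAnchor (F : (∀ i, X i) → ℝ) (c : ℝ) (a : ∀ i, X i) : Prop :=
  ∀ γ : Finset ι, Integrable (fun u ↦ F (updateFinset a γ u)) (Measure.pi fun i : γ ↦ μ i) ∧
    ∫ u, |F (updateFinset a γ u)| ∂(Measure.pi fun i : γ ↦ μ i) ≤ c

variable {μ} in
lemma IsGoodAnchor.integrable_piecewise {F : (∀ i, X i) → ℝ} {c : ℝ} {a : ∀ i, X i}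
    (ha : IsGoodAnchor μ F c a) {γ α : Finset ι} (h : γ ⊆ α) :
    Integrable (fun y ↦ F (γ.piecewise (updateFinset a α y) a)) (Measure.pi fun i : α ↦ μ i) ∧
      ∫ y, |F (γ.piecewise (updateFinset a α y) a)| ∂(Measure.pi fun i : α ↦ μ i) ≤ c := by
  have hpt : ∀ y, γ.piecewise (updateFinset a α y) a = updateFinset a γ (restrict₂ h y) := by
    intro y
    ext i
    by_cases hi : i ∈ γ
    · simp [updateFinset, hi, h hi]
    · simp [updateFinset, hi]
  have hmp := measurePreserving_restrict₂ μ h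
  obtain ⟨hint, hle⟩ := ha γ
  simp only [hpt]
  refine ⟨hmp.integrable_comp_of_integrable hint, le_of_eq_of_le ?_ hle⟩
  rw [← hmp.map_eq] at hint ⊢
  exact (integral_map hmp.aemeasurable hint.abs.aestronglyMeasurable).symm

variable {μ} in
lemma IsGoodAnchor.integrable_anchoredComponent {F : (∀ i, X i) → ℝ} {c : ℝ} {a : ∀ i, X i}
    (ha : IsGoodAnchor μ F c a) {β α : Finset ι} (h : β ⊆ α) :
    Integrable (fun y ↦ anchoredComponent a F β (updateFinset a α y))
        (Measure.pi fun i : α ↦ μ i) ∧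
      ∫ y, |anchoredComponent a F β (updateFinset a α y)| ∂(Measure.pi fun i : α ↦ μ i) ≤
        2 ^ #β * c := by
  have hterm : ∀ γ ∈ β.powerset,
      Integrable (fun y ↦ (-1) ^ #(β \ γ) * F (γ.piecewise (updateFinset a α y) a))
          (Measure.pi fun i : α ↦ μ i) ∧
        ∫ y, |(-1) ^ #(β \ γ) * F (γ.piecewise (updateFinset a α y) a)|
          ∂(Measure.pi fun i : α ↦ μ i) ≤ c := fun γ hγ ↦ by
    obtain ⟨hint, hle⟩ := ha.integrable_piecewise ((mem_powerset.mp hγ).trans h)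
    refine ⟨hint.const_mul _, ?_⟩
    simpa only [abs_mul, abs_pow, abs_neg, abs_one, one_pow, one_mul] using hle
  refine ⟨integrable_finsetSum _ fun γ hγ ↦ (hterm γ hγ).1, ?_⟩
  calc _ ≤ ∑ γ ∈ β.powerset, ∫ y, |(-1) ^ #(β \ γ) * F (γ.piecewise (updateFinset a α y) a)|
          ∂(Measure.pi fun i : α ↦ μ i) :=
        integral_abs_finset_sum_le fun γ hγ ↦ (hterm γ hγ).1
    _ ≤ ∑ _γ ∈ β.powerset, c := sum_le_sum fun γ hγ ↦ (hterm γ hγ).2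
    _ = 2 ^ #β * c := by rw [sum_const, card_powerset, nsmul_eq_mul, Nat.cast_pow, Nat.cast_ofNat]

variable [Fintype ι]

variable {μ} in
lemma IsGoodAnchor.integrable_sum_anchoredComponent {F : (∀ i, X i) → ℝ} {c : ℝ}
    {a : ∀ i, X i} (ha : IsGoodAnchor μ F c a) {α : Finset ι} {B : Finset (Finset ι)}
    (hB : ∀ β ∈ B, β ⊆ α) :
    Integrable (fun y ↦ ∑ β ∈ B, anchoredComponent a F β (updateFinset a α y))
        (Measure.pi fun i : α ↦ μ i) ∧
      ∫ y, |∑ β ∈ B, anchoredComponent a F β (updateFinset a α y)|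
        ∂(Measure.pi fun i : α ↦ μ i) ≤ (∑ β : Finset ι, (2 : ℝ) ^ #β) * c := by
  have hc : 0 ≤ c := (integral_nonneg fun _ ↦ abs_nonneg _).trans (ha ∅).2
  have hterm := fun β hβ ↦ ha.integrable_anchoredComponent (hB β hβ)
  refine ⟨integrable_finsetSum _ fun β hβ ↦ (hterm β hβ).1, ?_⟩
  calc _ ≤ ∑ β ∈ B, ∫ y, |anchoredComponent a F β (updateFinset a α y)|
          ∂(Measure.pi fun i : α ↦ μ i) :=
        integral_abs_finset_sum_le fun β hβ ↦ (hterm β hβ).1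
    _ ≤ ∑ β ∈ B, 2 ^ #β * c := sum_le_sum fun β hβ ↦ (hterm β hβ).2
    _ ≤ ∑ β : Finset ι, 2 ^ #β * c := sum_le_univ_sum_of_nonneg fun β ↦ by positivity
    _ = (∑ β : Finset ι, (2 : ℝ) ^ #β) * c := (sum_mul _ _ _).symm

lemma measureReal_not_integrable_updateFinset_le {F : (∀ i, X i) → ℝ}
    (hF : Integrable F (Measure.pi μ)) (γ : Finset ι) {t : ℝ} (ht : 0 < t) :
    (Measure.pi μ).real {a | ¬ (Integrable (fun u ↦ F (updateFinset a γ u))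
      (Measure.pi fun i : γ ↦ μ i) ∧ ∫ u, |F (updateFinset a γ u)| ∂(Measure.pi fun i : γ ↦ μ i)
        ≤ t * ∫ x, |F x| ∂(Measure.pi μ))} ≤ t⁻¹ := by
  let e := MeasurableEquiv.piEquivPiSubtypeProd X (· ∈ γ)
  have he : MeasurePreserving e (Measure.pi μ) ((Measure.pi fun i : γ ↦ μ i).prod
      (Measure.pi fun i : {i // i ∉ γ} ↦ μ i)) := by
    convert measurePreserving_piEquivPiSubtypeProd μ (· ∈ γ)
  have hsec : ∀ a u, updateFinset a γ u = e.symm (u, (e a).2) := fun a u ↦ by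
    ext i
    by_cases hi : i ∈ γ <;> simp [updateFinset, e, hi, MeasurableEquiv.piEquivPiSubtypeProd]
  have hsnd : MeasurePreserving (fun a ↦ (e a).2) (Measure.pi μ) _ :=
    measurePreserving_snd.comp he
  have hH : Integrable (F ∘ e.symm) _ := (he.symm e).integrable_comp_of_integrable hF
  rw [← (he.symm e).integral_comp' fun x ↦ |F x|]
  simp only [hsec]
  exact (ENNReal.toReal_mono (measure_ne_top _ _) (hsnd.measure_preimage_le _)).trans
    (measureReal_not_integrable_section_le hH ht)

lemma exists_isGoodAnchor {F : (∀ i, X i) → ℝ} (hF : Integrable F (Measure.pi μ)) :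
    ∃ a, IsGoodAnchor μ F (2 * Fintype.card (Finset ι) * ∫ x, |F x| ∂(Measure.pi μ)) a := by
  have hN : (0 : ℝ) < Fintype.card (Finset ι) := by exact_mod_cast Fintype.card_pos
  refine exists_forall_of_sum_measureReal_lt_one (ν := Measure.pi μ) ?_
  calc _ ≤ ∑ _γ : Finset ι, (2 * Fintype.card (Finset ι) : ℝ)⁻¹ :=
        sum_le_sum fun γ _ ↦ measureReal_not_integrable_updateFinset_le μ hF γ (by positivity)
    _ < 1 := by
      rw [sum_const, card_univ, nsmul_eq_mul]
      field_simp
      norm_num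

end Anchor

lemma exists_superset_card_eq {ι : Type*} [Fintype ι] {k : ℕ} (hk : k ≤ Fintype.card ι) :
    ∃ e : Finset ι → Finset ι, ∀ β, #β ≤ k → β ⊆ e β ∧ #(e β) = k := by
  have h : ∀ β : Finset ι, ∃ α, #β ≤ k → β ⊆ α ∧ #α = k := fun β ↦ by
    by_cases hβ : #β ≤ k
    · obtain ⟨α, hβα, -, hα⟩ := exists_subsuperset_card_eq (subset_univ β) hβ (by rwa [card_univ])
      exact ⟨α, fun _ ↦ ⟨hβα, hα⟩⟩
    · exact ⟨β, fun h ↦ absurd h hβ⟩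
  choose e he using h
  exact ⟨e, he⟩

theorem exists_integrable_decomposition {ι : Type*} [Fintype ι] [DecidableEq ι] {X : ι → Type*}
    [∀ i, MeasurableSpace (X i)] (μ : ∀ i, Measure (X i)) [∀ i, IsProbabilityMeasure (μ i)]
    {k : ℕ} (hk : k ≤ Fintype.card ι) {F : (∀ i, X i) → ℝ} (hF : Integrable F (Measure.pi μ))
    {f : (α : Finset ι) → (∀ i : α, X i) → ℝ}
    (hf : ∀ x, F x = ∑ α ∈ powersetCard k univ, f α (fun i ↦ x i)) :
    ∃ g : (α : Finset ι) → (∀ i : α, X i) → ℝ,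
      (∀ α ∈ powersetCard k univ, Integrable (g α) (Measure.pi fun i : α ↦ μ i) ∧
        ∫ y, |g α y| ∂(Measure.pi fun i : α ↦ μ i) ≤
          (∑ β : Finset ι, (2 : ℝ) ^ #β) * (2 * Fintype.card (Finset ι)) *
            ∫ x, |F x| ∂(Measure.pi μ)) ∧
      ∀ x, F x = ∑ α ∈ powersetCard k univ, g α (fun i ↦ x i) := by
  obtain ⟨a, ha⟩ := exists_isGoodAnchor μ hF
  obtain ⟨e, he⟩ := exists_superset_card_eq hk
  let B (α : Finset ι) : Finset (Finset ι) := {β | #β ≤ k ∧ e β = α}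
  have hB : ∀ α, ∀ β ∈ B α, β ⊆ α := fun α β hβ ↦ by
    obtain ⟨hβk, rfl⟩ := mem_filter.mp hβ |>.2
    exact (he β hβk).1
  refine ⟨fun α y ↦ ∑ β ∈ B α, anchoredComponent a F β (updateFinset a α y),
    fun α _ ↦ ?_, fun x ↦ ?_⟩
  · rw [mul_assoc]
    exact ha.integrable_sum_anchoredComponent (hB α)
  · calc F x = ∑ β : Finset ι, anchoredComponent a F β x := (sum_anchoredComponent a F x).symm
      _ = ∑ β with #β ≤ k, anchoredComponent a F β x := by
        refine (sum_filter_of_ne fun β _ hβ ↦ ?_).symm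
        by_contra hβk
        refine hβ (anchoredComponent_eq_zero_of_forall_not_subset hf (fun α hα hsub ↦ ?_) x)
        have := card_le_card hsub
        rw [(mem_powersetCard.mp hα).2] at this
        omega
      _ = ∑ α ∈ powersetCard k univ, ∑ β ∈ B α, anchoredComponent a F β x := by
        rw [← sum_fiberwise_of_maps_to (t := powersetCard k univ) (g := e) fun β hβ ↦
          mem_powersetCard.mpr ⟨subset_univ _, (he β (mem_filter.mp hβ).2).2⟩]
        simp only [B, filter_filter]
      _ = ∑ α ∈ powersetCard k univ,
            ∑ β ∈ B α, anchoredComponent a F β (updateFinset a α fun i ↦ x i) :=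
        sum_congr rfl fun α _ ↦ sum_congr rfl fun β hβ ↦
          dependsOn_anchoredComponent a F β fun i hi ↦ by
            simp [updateFinset, hB α β hβ hi]

theorem statement11_general (n k : ℕ) (hkn : k < n) :
    ∃ C : ℝ,
      ∀ (X : Fin n → Type)
        [∀ i, TopologicalSpace (X i)] [∀ i, PolishSpace (X i)]
        [∀ i, MeasurableSpace (X i)] [∀ i, BorelSpace (X i)]
        (μ : ∀ i, Measure (X i)), (∀ i, IsProbabilityMeasure (μ i)) →
        ∀ F : (∀ i, X i) → ℝ,
          Integrable F (Measure.pi μ) →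
          (∃ f : (α : Finset (Fin n)) → ((i : α) → X i) → ℝ,
            ∀ x : ∀ i, X i,
              F x = ∑ α ∈ Finset.powersetCard k (Finset.univ : Finset (Fin n)),
                f α (fun i => x i)) →
          ∃ g : (α : Finset (Fin n)) → ((i : α) → X i) → ℝ,
            (∀ α ∈ Finset.powersetCard k (Finset.univ : Finset (Fin n)),
              Integrable (g α) (Measure.pi fun i : α => μ i) ∧
              ∫ y, |g α y| ∂(Measure.pi fun i : α => μ i) ≤
                C * ∫ x, |F x| ∂(Measure.pi μ)) ∧
            ∀ x : ∀ i, X i,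
              F x = ∑ α ∈ Finset.powersetCard k (Finset.univ : Finset (Fin n)),
                g α (fun i => x i) := by
  refine ⟨(∑ β : Finset (Fin n), (2 : ℝ) ^ #β) * (2 * Fintype.card (Finset (Fin n))),
    fun X _ _ _ _ μ _ F hF ⟨f, hf⟩ ↦ ?_⟩
  exact exists_integrable_decomposition μ (by simpa using hkn.le) hF hf

/-- for `1 ≤ k < n` there is a constant `C`, depending only on `n` and `k`, such
that every integrable finite `(n,k)`-function `F` on a product of Polish probability spaces can
be written as `F(x) = Σ_{|α|=k} f̂_α(x_α)` with each `f̂_α` integrable and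
`‖f̂_α‖₁ ≤ C·‖F‖₁`. -/
theorem statement11 (n k : ℕ) (hk : 1 ≤ k) (hkn : k < n) :
    ∃ C : ℝ,
      ∀ (X : Fin n → Type)
        [∀ i, TopologicalSpace (X i)] [∀ i, PolishSpace (X i)]
        [∀ i, MeasurableSpace (X i)] [∀ i, BorelSpace (X i)]
        (μ : ∀ i, Measure (X i)), (∀ i, IsProbabilityMeasure (μ i)) →
        ∀ F : (∀ i, X i) → ℝ,
          Integrable F (Measure.pi μ) →
          (∃ f : (α : Finset (Fin n)) → ((i : α) → X i) → ℝ,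
            ∀ x : ∀ i, X i,
              F x = ∑ α ∈ Finset.powersetCard k (Finset.univ : Finset (Fin n)),
                f α (fun i => x i)) →
          ∃ g : (α : Finset (Fin n)) → ((i : α) → X i) → ℝ,
            (∀ α ∈ Finset.powersetCard k (Finset.univ : Finset (Fin n)),
              Integrable (g α) (Measure.pi fun i : α => μ i) ∧
              ∫ y, |g α y| ∂(Measure.pi fun i : α => μ i) ≤
                C * ∫ x, |F x| ∂(Measure.pi μ)) ∧
            ∀ x : ∀ i, X i,
              F x = ∑ α ∈ Finset.powersetCard k (Finset.univ : Finset (Fin n)),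
                g α (fun i => x i) :=
  statement11_general n k hkn
end

section
/- Let X_1, ..., X_n be Polish spaces and let {μ_α}, indexed by subsets α ⊆ {1,...,n} of size k, be Borel probability measures on the spaces X_α. Let A ⊆ X = ∏_{i=1}^n X_i be a measurable set whose proper (n,k)-thickness sth(A) equals 0. Then the infimum defining sth(A) is attained: there exist measurable subsets Y_α ⊆ X_α with μ_α(Y_α) = 0 for every α of size k and A ⊆ ∪_α pr_α^{-1}(Y_α). -/
open MeasureTheory Filter
open scoped ENNReal

/-!
Take covers `Y⁽ᵐ⁾` whose total measures are summable in `m` and put `Y_α = limsup_m Y⁽ᵐ⁾_α`.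
By Borel–Cantelli each `Y_α` is null, and a point of `A` lies, for every `m`, in one of the
finitely many cylinders `pr_α⁻¹(Y⁽ᵐ⁾_α)`, hence in one fixed `α`-cylinder for infinitely many `m`,
that is, in `pr_α⁻¹(Y_α)`.
-/

lemma exists_seq_mem_tsum_ne_top_of_sInf_eq_zero {S : Set ℝ≥0∞} (hS : sInf S = 0) :
    ∃ r : ℕ → ℝ≥0∞, (∀ m, r m ∈ S) ∧ ∑' m, r m ≠ ∞ := by
  have hlt : ∀ m : ℕ, ∃ r ∈ S, r < 2⁻¹ ^ m := fun m =>
    sInf_lt_iff.mp (hS ▸ ENNReal.pow_pos (by norm_num) m)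
  choose r hrS hr using hlt
  refine ⟨r, hrS, ne_top_of_le_ne_top ?_ (ENNReal.tsum_le_tsum fun m => (hr m).le)⟩
  rw [ENNReal.tsum_geometric, ENNReal.one_sub_inv_two, inv_inv]
  exact ENNReal.ofNat_ne_top

lemma subset_biUnion_preimage_limsup {ι Ω : Type*} {Z : ι → Type*} (s : Finset ι)
    (π : ∀ α, Ω → Z α) {A : Set Ω} {Y : ℕ → ∀ α, Set (Z α)}
    (hcov : ∀ m, A ⊆ ⋃ α ∈ s, π α ⁻¹' Y m α) :
    A ⊆ ⋃ α ∈ s, π α ⁻¹' limsup (fun m => Y m α) atTop := by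
  intro x hx
  have hfreq : ∃ᶠ m in atTop, ∃ α ∈ s, π α x ∈ Y m α :=
    Frequently.of_forall fun m => by simpa using hcov m hx
  obtain ⟨α, hα, hαfreq⟩ := s.frequently_exists.mp hfreq
  exact Set.mem_biUnion hα (mem_limsup_iff_frequently_mem.mpr hαfreq)

theorem statement13_general (n k : ℕ) (X : Fin n → Type)
    [∀ i, MeasurableSpace (X i)]
    (μ : (α : Finset (Fin n)) → Measure ((i : α) → X i))
    (A : Set (∀ i, X i))
    (hsth : sInf {r : ℝ≥0∞ | ∃ Y : (α : Finset (Fin n)) → Set ((i : α) → X i),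
        (∀ α ∈ Finset.powersetCard k (Finset.univ : Finset (Fin n)),
          MeasurableSet (Y α)) ∧
        A ⊆ (⋃ α ∈ Finset.powersetCard k (Finset.univ : Finset (Fin n)),
          (fun (x : ∀ i, X i) (i : α) => x i) ⁻¹' Y α) ∧
        r = ∑ α ∈ Finset.powersetCard k (Finset.univ : Finset (Fin n)),
          μ α (Y α)} = 0) :
    ∃ Y : (α : Finset (Fin n)) → Set ((i : α) → X i),
      (∀ α ∈ Finset.powersetCard k (Finset.univ : Finset (Fin n)),
        MeasurableSet (Y α) ∧ μ α (Y α) = 0) ∧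
      A ⊆ ⋃ α ∈ Finset.powersetCard k (Finset.univ : Finset (Fin n)),
        (fun (x : ∀ i, X i) (i : α) => x i) ⁻¹' Y α := by
  obtain ⟨r, hr, hsum⟩ := exists_seq_mem_tsum_ne_top_of_sInf_eq_zero hsth
  choose Y hmeas hcov hrY using hr
  refine ⟨fun α => limsup (fun m => Y m α) atTop, fun α hα => ⟨?_, ?_⟩,
    subset_biUnion_preimage_limsup _ _ hcov⟩
  · exact .measurableSet_limsup fun m => hmeas m α hα
  · refine measure_limsup_atTop_eq_zero (ne_top_of_le_ne_top hsum ?_)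
    refine ENNReal.tsum_le_tsum fun m => ?_
    rw [hrY m]
    exact Finset.single_le_sum (f := fun β => μ β (Y m β)) (fun _ _ => zero_le) hα

/-- if a measurable set `A` in a product of Polish spaces has proper
`(n,k)`-thickness zero, the infimum defining the thickness is attained: there are measurable
null sets `Y_α ⊆ X_α` (for all `α` of cardinality `k`) with
`A ⊆ ⋃_α pr_α⁻¹(Y_α)`. -/
theorem statement13 (n k : ℕ) (X : Fin n → Type)
    [∀ i, TopologicalSpace (X i)] [∀ i, PolishSpace (X i)]
    [∀ i, MeasurableSpace (X i)] [∀ i, BorelSpace (X i)]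
    (μ : (α : Finset (Fin n)) → Measure ((i : α) → X i))
    (hprob : ∀ α : Finset (Fin n), α.card = k → IsProbabilityMeasure (μ α))
    (A : Set (∀ i, X i)) (hA : MeasurableSet A)
    (hsth : sInf {r : ℝ≥0∞ | ∃ Y : (α : Finset (Fin n)) → Set ((i : α) → X i),
        (∀ α ∈ Finset.powersetCard k (Finset.univ : Finset (Fin n)),
          MeasurableSet (Y α)) ∧
        A ⊆ (⋃ α ∈ Finset.powersetCard k (Finset.univ : Finset (Fin n)),
          (fun (x : ∀ i, X i) (i : α) => x i) ⁻¹' Y α) ∧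
        r = ∑ α ∈ Finset.powersetCard k (Finset.univ : Finset (Fin n)),
          μ α (Y α)} = 0) :
    ∃ Y : (α : Finset (Fin n)) → Set ((i : α) → X i),
      (∀ α ∈ Finset.powersetCard k (Finset.univ : Finset (Fin n)),
        MeasurableSet (Y α) ∧ μ α (Y α) = 0) ∧
      A ⊆ ⋃ α ∈ Finset.powersetCard k (Finset.univ : Finset (Fin n)),
        (fun (x : ∀ i, X i) (i : α) => x i) ⁻¹' Y α :=
  statement13_general n k X μ A hsth
end

section
/- Let a_1, a_2, a_3 be positive integers. Then there exists a Borel probability measure π on [0,1]³ concentrated on the set {(x_1, x_2, x_3) ∈ [0,1]³ : a_1 x_1 + a_2 x_2 + a_3 x_3 ∈ ℤ} (i.e. this set has full π-measure) such that each of the three pushforwards of π under the coordinate projections (x_1,x_2,x_3) ↦ (x_i, x_j), for {i,j} ∈ {{1,2},{1,3},{2,3}}, equals the Lebesgue measure restricted to the square [0,1]². -/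
/-!
Take `(u, v)` uniform on the torus `(ℝ/ℤ)²` and let `x₁ = a₃u`, `x₂ = a₃v`, `x₃ = -a₁u - a₂v`,
each read off in `(0, 1]`; then `a₁x₁ + a₂x₂ + a₃x₃ ≡ 0 mod 1`. Up to swapping `u` and `v`, every
pair of coordinates is the image of `(u, v)` under a skew product `(u, v) ↦ (m u, k u + n v)` with
`m, n ≠ 0`. Multiplication by a nonzero integer preserves Haar measure on the circle, hence so does
this skew product fibrewise, and every pair of coordinates is uniform on the unit square.
-/

open MeasureTheory Set

section SkewProduct

variable {G : Type*} [AddCommGroup G] [TopologicalSpace G] [IsTopologicalAddGroup G]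
  [CompactSpace G] [DivisibleBy G ℤ] [MeasurableSpace G] [BorelSpace G]
  [SecondCountableTopology G] (μ : Measure G) [μ.IsAddHaarMeasure]

theorem measurePreserving_zsmul_skew {m n : ℤ} (hm : m ≠ 0) (hn : n ≠ 0) (k : ℤ) :
    MeasurePreserving (fun p : G × G => (m • p.1, k • p.1 + n • p.2)) (μ.prod μ) (μ.prod μ) :=
  (Measure.measurePreserving_zsmul μ hm).skew_product (by fun_prop) <| ae_of_all _ fun u =>
    ((measurePreserving_add_left μ (k • u)).comp (Measure.measurePreserving_zsmul μ hn)).map_eq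

theorem measurePreserving_zsmul_skew_swap {m k : ℤ} (hm : m ≠ 0) (hk : k ≠ 0) (n : ℤ) :
    MeasurePreserving (fun p : G × G => (m • p.2, k • p.1 + n • p.2)) (μ.prod μ) (μ.prod μ) := by
  convert (measurePreserving_zsmul_skew μ hm hk n).comp Measure.measurePreserving_swap using 1
  ext p <;> simp [add_comm]

end SkewProduct

theorem AddCircle.measurePreserving_coe_equivIoc (T : ℝ) [Fact (0 < T)] (a : ℝ) :
    MeasurePreserving (fun z : AddCircle T => (equivIoc T a z : ℝ)) volume
      (volume.restrict (Ioc a (a + T))) :=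
  (measurePreserving_subtype_coe measurableSet_Ioc).comp (measurePreserving_equivIoc T)

theorem Measure.map_apply_eq_one_of_forall_mem {α β : Type*} [MeasurableSpace α]
    [MeasurableSpace β] {μ : Measure α} [IsProbabilityMeasure μ] {f : α → β}
    (hf : AEMeasurable f μ) {s : Set β} (hs : ∀ x, f x ∈ s) : μ.map f s = 1 := by
  refine le_antisymm prob_le_one ?_
  calc 1 = μ (f ⁻¹' s) := by rw [show f ⁻¹' s = univ from eq_univ_of_forall hs, measure_univ]
    _ ≤ μ.map f s := Measure.le_map_apply hf s

instance : Fact ((0 : ℝ) < 1) := ⟨one_pos⟩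

instance : IsProbabilityMeasure (volume : Measure (AddCircle (1 : ℝ))) :=
  ⟨by simp [AddCircle.measure_univ]⟩

theorem exists_int_eq_of_coe_eq_zsmul (a₁ a₂ a₃ : ℤ) {x₁ x₂ x₃ : ℝ} (u v : AddCircle (1 : ℝ))
    (h₁ : (x₁ : AddCircle (1 : ℝ)) = a₃ • u) (h₂ : (x₂ : AddCircle (1 : ℝ)) = a₃ • v)
    (h₃ : (x₃ : AddCircle (1 : ℝ)) = -a₁ • u + -a₂ • v) :
    ∃ z : ℤ, a₁ * x₁ + a₂ * x₂ + a₃ * x₃ = z := by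
  have hzero : ((a₁ * x₁ + a₂ * x₂ + a₃ * x₃ : ℝ) : AddCircle (1 : ℝ)) = 0 := by
    simp only [← zsmul_eq_mul, QuotientAddGroup.mk_add, QuotientAddGroup.mk_zsmul, h₁, h₂, h₃]
    module
  obtain ⟨z, hz⟩ := (AddCircle.coe_eq_zero_iff 1).mp hzero
  exact ⟨z, by simpa using hz.symm⟩

/-- for positive integers `a_1, a_2, a_3` there exists a Borel probability
measure `π` on `[0,1]³` giving full mass to the set
`{(x_1,x_2,x_3) : a_1x_1 + a_2x_2 + a_3x_3 ∈ ℤ}` whose three two-dimensional coordinate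
projections all equal the Lebesgue measure restricted to the unit square. -/
theorem statement19 (a1 a2 a3 : ℕ) (h1 : 0 < a1) (h2 : 0 < a2) (h3 : 0 < a3) :
    ∃ π : Measure (ℝ × ℝ × ℝ), IsProbabilityMeasure π ∧
      π (Set.Icc (0:ℝ) 1 ×ˢ (Set.Icc (0:ℝ) 1 ×ˢ Set.Icc (0:ℝ) 1)) = 1 ∧
      π {p : ℝ × ℝ × ℝ | ∃ z : ℤ,
          (a1 : ℝ) * p.1 + (a2 : ℝ) * p.2.1 + (a3 : ℝ) * p.2.2 = (z : ℝ)} = 1 ∧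
      Measure.map (fun p : ℝ × ℝ × ℝ => (p.1, p.2.1)) π =
        (volume.restrict (Set.Icc (0:ℝ) 1)).prod (volume.restrict (Set.Icc (0:ℝ) 1)) ∧
      Measure.map (fun p : ℝ × ℝ × ℝ => (p.1, p.2.2)) π =
        (volume.restrict (Set.Icc (0:ℝ) 1)).prod (volume.restrict (Set.Icc (0:ℝ) 1)) ∧
      Measure.map (fun p : ℝ × ℝ × ℝ => p.2) π =
        (volume.restrict (Set.Icc (0:ℝ) 1)).prod (volume.restrict (Set.Icc (0:ℝ) 1)) := by
  set r : AddCircle (1 : ℝ) → ℝ := fun z => AddCircle.equivIoc 1 0 z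
  have hr : MeasurePreserving r volume (volume.restrict (Icc 0 1)) := by
    simpa [Measure.restrict_congr_set Ioc_ae_eq_Icc] using
      AddCircle.measurePreserving_coe_equivIoc 1 0
  have hr₂ := hr.prod hr
  have hr_mem (z : AddCircle (1 : ℝ)) : r z ∈ Icc 0 1 :=
    Ioc_subset_Icc_self (by simpa using (AddCircle.equivIoc 1 0 z).2)
  have ha₁ : (-a1 : ℤ) ≠ 0 := by omega
  have ha₂ : (-a2 : ℤ) ≠ 0 := by omega
  have ha₃ : (a3 : ℤ) ≠ 0 := by omega
  set F : AddCircle (1 : ℝ) × AddCircle (1 : ℝ) → ℝ × ℝ × ℝ := fun w =>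
    (r ((a3 : ℤ) • w.1), r ((a3 : ℤ) • w.2), r ((-a1 : ℤ) • w.1 + (-a2 : ℤ) • w.2))
  have hF : Measurable F := by have := hr.measurable; fun_prop
  refine ⟨(volume.prod volume).map F, Measure.isProbabilityMeasure_map hF.aemeasurable,
    Measure.map_apply_eq_one_of_forall_mem hF.aemeasurable fun w => ⟨hr_mem _, hr_mem _, hr_mem _⟩,
    Measure.map_apply_eq_one_of_forall_mem hF.aemeasurable fun w => ?_, ?_, ?_, ?_⟩
  · exact_mod_cast exists_int_eq_of_coe_eq_zsmul a1 a2 a3 w.1 w.2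
      AddCircle.coe_equivIoc AddCircle.coe_equivIoc AddCircle.coe_equivIoc
  · rw [Measure.map_map (by fun_prop) hF]
    exact (hr₂.comp ((Measure.measurePreserving_zsmul volume ha₃).prod
      (Measure.measurePreserving_zsmul volume ha₃))).map_eq
  · rw [Measure.map_map (by fun_prop) hF]
    exact (hr₂.comp (measurePreserving_zsmul_skew volume ha₃ ha₂ _)).map_eq
  · rw [Measure.map_map (by fun_prop) hF]
    exact (hr₂.comp (measurePreserving_zsmul_skew_swap volume ha₃ ha₁ _)).map_eq
end
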